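/- arXiv:1904.06669 — 7 statements merged into one kernel-verified Lean document; each statement's English description precedes it below -/
import Mathlib

section
/- Let q be a real number with 1 ≤ q < ∞. If f : ℝ → ℝ is continuously differentiable, f belongs to L^q(ℝ), and its derivative f' is integrable on ℝ, then ∫_ℝ f'(t) dt = 0. -/
/-!
By the fundamental theorem of calculus, an integrable derivative forces `f` to have limits at
`±∞`, and `∫ f'` is their difference. Since `‖f‖^q` is integrable, `f` can only have limit `0`
along a filter all of whose sets have infinite measure, such as `atTop` and `atBot` on `ℝ`.
-/

open MeasureTheory Filter Topology ENNReal

theorem MeasureTheory.MemLp.eq_zero_of_tendsto {α E : Type*} [MeasurableSpace α]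
    [NormedAddCommGroup E] {μ : Measure α} {l : Filter α} {p : ℝ≥0∞} {f : α → E} {a : E}
    (hf : MemLp f p μ) (hp_ne_zero : p ≠ 0) (hp_ne_top : p ≠ ∞) (hl : ∀ s ∈ l, μ s = ∞)
    (hfa : Tendsto f l (𝓝 a)) : a = 0 := by
  have hp : 0 < p.toReal := ENNReal.toReal_pos hp_ne_zero hp_ne_top
  have hint : IntegrableAtFilter (fun x ↦ ‖f x‖ ^ p.toReal) l μ :=
    (hf.integrable_norm_rpow hp_ne_zero hp_ne_top).integrableAtFilter l
  have hlim : ‖a‖ ^ p.toReal = 0 :=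
    hint.eq_zero_of_tendsto hl (hfa.norm.rpow_const (Or.inr hp.le))
  rwa [Real.rpow_eq_zero (norm_nonneg a) hp.ne', norm_eq_zero] at hlim

theorem Real.volume_eq_top_of_mem_atTop {s : Set ℝ} (hs : s ∈ atTop) : volume s = ∞ := by
  obtain ⟨b, hb⟩ := mem_atTop_sets.1 hs
  exact top_le_iff.1 (Real.volume_Ici (a := b) ▸ measure_mono hb)

theorem Real.volume_eq_top_of_mem_atBot {s : Set ℝ} (hs : s ∈ atBot) : volume s = ∞ := by
  obtain ⟨b, hb⟩ := mem_atBot_sets.1 hs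
  exact top_le_iff.1 (Real.volume_Iic (a := b) ▸ measure_mono hb)

theorem MeasureTheory.integral_eq_zero_of_hasDerivAt_of_memLp {E : Type*}
    [NormedAddCommGroup E] [NormedSpace ℝ E] [CompleteSpace E] {f f' : ℝ → E} {p : ℝ≥0∞}
    (hderiv : ∀ x, HasDerivAt f (f' x) x) (hf' : Integrable f') (hf : MemLp f p volume)
    (hp_ne_zero : p ≠ 0) (hp_ne_top : p ≠ ∞) : ∫ x, f' x = 0 := by
  have htop : Tendsto f atTop (𝓝 (limUnder atTop f)) :=
    tendsto_limUnder_of_hasDerivAt_of_integrableOn_Ioi (a := 0) (fun x _ ↦ hderiv x)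
      hf'.integrableOn
  have hbot : Tendsto f atBot (𝓝 (limUnder atBot f)) :=
    tendsto_limUnder_of_hasDerivAt_of_integrableOn_Iic (a := 0) (fun x _ ↦ hderiv x)
      hf'.integrableOn
  have htop_zero : limUnder atTop f = 0 := hf.eq_zero_of_tendsto hp_ne_zero hp_ne_top
    (fun _ ↦ Real.volume_eq_top_of_mem_atTop) htop
  have hbot_zero : limUnder atBot f = 0 := hf.eq_zero_of_tendsto hp_ne_zero hp_ne_top
    (fun _ ↦ Real.volume_eq_top_of_mem_atBot) hbot
  rw [integral_of_hasDerivAt_of_tendsto hderiv hf' hbot htop, htop_zero, hbot_zero, sub_zero]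

/-- If `f : ℝ → ℝ` is continuously differentiable, belongs to `L^q` for some
`1 ≤ q < ∞`, and its derivative is integrable, then `∫ f' = 0`. -/
theorem integral_deriv_eq_zero_of_memLp
    (q : ℝ) (hq : 1 ≤ q)
    (f : ℝ → ℝ) (hf : ContDiff ℝ 1 f)
    (hfq : MemLp f (ENNReal.ofReal q) volume)
    (hf' : Integrable (deriv f) volume) :
    ∫ t : ℝ, deriv f t = 0 :=
  integral_eq_zero_of_hasDerivAt_of_memLp
    (fun x ↦ (hf.differentiable one_ne_zero x).hasDerivAt) hf' hfq
    (ofReal_pos.2 (by linarith)).ne' ofReal_ne_top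
end

section
/- Let n ≥ 1 and let F : ℝ^n → ℝ^n be a continuously differentiable vector field such that F is integrable on ℝ^n and its divergence div F = Σ_{i=1}^n ∂F_i/∂x_i is integrable on ℝ^n. Then ∫_{ℝ^n} div F(x) dx = 0. -/
/-!
On `ℝⁿ⁺¹ = Fin (n + 1) → ℝ`, the divergence theorem writes the integral of `div G` over the cube
`[-R, R]ⁿ⁺¹` as a signed sum of integrals of the components `G i` over the faces `xᵢ = ±R`.
By Fubini, the `L¹` norms of `G i` on the slices `xᵢ = t` form an integrable function of `t`,
so the total face contribution `Φ R` is integrable on `ℝ`, while the cube integrals tend to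
`∫ div G`. A nonzero limit would force `Φ ≥ c > 0` on a half-line, which is impossible.
-/

open MeasureTheory Filter Set Topology

theorem eq_zero_of_tendsto_of_ae_norm_le_of_integrableOn {E : Type*} [NormedAddCommGroup E]
    {g : ℝ → E} {Φ : ℝ → ℝ} {L : E} {a : ℝ} (hg : Tendsto g atTop (𝓝 L))
    (hΦ : IntegrableOn Φ (Ioi a)) (hle : ∀ᵐ R, a < R → ‖g R‖ ≤ Φ R) : L = 0 := by
  by_contra hL
  have hc : 0 < ‖L‖ / 2 := by positivity
  obtain ⟨T, hT⟩ : ∃ T, ∀ R ≥ T, ‖L‖ / 2 < ‖g R‖ :=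
    eventually_atTop.1 (hg.norm.eventually (lt_mem_nhds (half_lt_self (norm_pos_iff.2 hL))))
  have hconst : IntegrableOn (fun _ => ‖L‖ / 2) (Ioi (max a T)) := by
    refine (hΦ.mono_set (Ioi_subset_Ioi (le_max_left a T))).mono' aestronglyMeasurable_const ?_
    filter_upwards [ae_restrict_of_ae hle, ae_restrict_mem measurableSet_Ioi] with R hR hRT
    rw [Real.norm_of_nonneg hc.le]
    exact (hT R ((le_max_right a T).trans hRT.le)).le.trans
      (hR ((le_max_left a T).trans_lt hRT))
  simp [integrableOn_const_iff, hc.ne'] at hconst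

theorem closedBall_zero_eq_Icc_pi {ι : Type*} [Fintype ι] {R : ℝ} (hR : 0 ≤ R) :
    Metric.closedBall (0 : ι → ℝ) R = Icc (fun _ => -R) (fun _ => R) := by
  simp [closedBall_pi _ hR, Real.closedBall_zero_eq_Icc, pi_univ_Icc]

theorem ContinuousLinearEquiv.fderiv_conj_apply {𝕜 E F : Type*} [NontriviallyNormedField 𝕜]
    [NormedAddCommGroup E] [NormedSpace 𝕜 E] [NormedAddCommGroup F] [NormedSpace 𝕜 F]
    (e : E ≃L[𝕜] F) (f : E → E) (x v : F) :
    fderiv 𝕜 (e ∘ f ∘ e.symm) x v = e (fderiv 𝕜 f (e.symm x) (e.symm v)) := by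
  rw [e.comp_fderiv, e.symm.comp_right_fderiv]
  rfl

section Slices

variable {n : ℕ} {E : Type*} [NormedAddCommGroup E]

theorem MeasureTheory.Integrable.comp_insertNth {f : (Fin (n + 1) → ℝ) → E} (hf : Integrable f)
    (i : Fin (n + 1)) :
    Integrable (fun p : ℝ × (Fin n → ℝ) => f (i.insertNth p.1 p.2)) (volume.prod volume) := by
  rw [← Measure.volume_eq_prod]
  have hmp := (volume_preserving_piFinSuccAbove (fun _ : Fin (n + 1) => ℝ) i).symm
  exact (hmp.integrable_comp_emb (MeasurableEquiv.measurableEmbedding _)).2 hf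

variable [NormedSpace ℝ E]

theorem ae_norm_setIntegral_insertNth_le {f : (Fin (n + 1) → ℝ) → E} (hf : Integrable f)
    (i : Fin (n + 1)) :
    ∀ᵐ t, ∀ s, ‖∫ y in s, f (i.insertNth t y)‖ ≤ ∫ y, ‖f (i.insertNth t y)‖ := by
  filter_upwards [(hf.comp_insertNth i).prod_right_ae] with t ht s
  exact (norm_integral_le_integral_norm _).trans
    (setIntegral_le_integral ht.norm (ae_of_all _ fun _ => norm_nonneg _))

theorem integral_divergence_eq_zero_of_integrable {G : (Fin (n + 1) → ℝ) → Fin (n + 1) → E}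
    (hG : Differentiable ℝ G) (hGi : Integrable G)
    (hdiv : Integrable fun x => ∑ i, fderiv ℝ G x (Pi.single i 1) i) :
    ∫ x, ∑ i, fderiv ℝ G x (Pi.single i 1) i = 0 := by
  set ψ : Fin (n + 1) → ℝ → ℝ := fun i t => ∫ y, ‖G (i.insertNth t y) i‖
  have hψ (i : Fin (n + 1)) : Integrable (ψ i) :=
    ((hGi.eval i).comp_insertNth i).integral_norm_prod_left
  have hface (i : Fin (n + 1)) : ∀ᵐ t, ∀ s,
      ‖∫ y in s, G (i.insertNth t y) i‖ ≤ ψ i t ∧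
        ‖∫ y in s, G (i.insertNth (-t) y) i‖ ≤ ψ i (-t) := by
    filter_upwards [ae_norm_setIntegral_insertNth_le (hGi.eval i) i,
      (Measure.measurePreserving_neg volume).quasiMeasurePreserving.ae
        (ae_norm_setIntegral_insertNth_le (hGi.eval i) i)] with t ht hnt s
    exact ⟨ht s, hnt s⟩
  refine eq_zero_of_tendsto_of_ae_norm_le_of_integrableOn (a := 0)
    ((aecover_closedBall (x := 0) tendsto_id).integral_tendsto_of_countably_generated hdiv)
    (Φ := fun R => ∑ i, (ψ i R + ψ i (-R)))
    (integrable_finsetSum _ fun i _ => (hψ i).add (hψ i).comp_neg).integrableOn ?_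
  filter_upwards [ae_all_iff.2 hface] with R hR hR0
  rw [id, closedBall_zero_eq_Icc_pi hR0.le, integral_divergence_of_hasFDerivAt_off_countable _ _
    (fun _ => by simp only; linarith) G (fderiv ℝ G) ∅ countable_empty hG.continuous.continuousOn
    (fun x _ => (hG x).hasFDerivAt) hdiv.integrableOn]
  refine (norm_sum_le _ _).trans (Finset.sum_le_sum fun i _ => ?_)
  exact (norm_sub_le _ _).trans (add_le_add (hR i _).1 (hR i _).2)

end Slices

theorem integral_div_eq_zero_of_integrable_general
    (n : ℕ)
    (F : EuclideanSpace ℝ (Fin n) → EuclideanSpace ℝ (Fin n))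
    (hF : ContDiff ℝ 1 F)
    (hFint : Integrable F volume)
    (hdivint : Integrable
      (fun x => ∑ i : Fin n, fderiv ℝ F x (EuclideanSpace.single i 1) i) volume) :
    ∫ x : EuclideanSpace ℝ (Fin n),
      ∑ i : Fin n, fderiv ℝ F x (EuclideanSpace.single i 1) i = 0 := by
  obtain _ | n := n
  · simp
  set e := EuclideanSpace.equiv (Fin (n + 1)) ℝ
  have hmp : MeasurePreserving e.symm := PiLp.volume_preserving_toLp _
  have hemb : MeasurableEmbedding e.symm := (MeasurableEquiv.toLp 2 _).measurableEmbedding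
  have hdiv (x : Fin (n + 1) → ℝ) :
      ∑ i, fderiv ℝ (e ∘ F ∘ e.symm) x (Pi.single i 1) i
        = ∑ i, fderiv ℝ F (e.symm x) (EuclideanSpace.single i 1) i := by
    simp [e.fderiv_conj_apply, e]
  have hG : Differentiable ℝ (e ∘ F ∘ e.symm) :=
    e.differentiable.comp ((hF.differentiable one_ne_zero).comp e.symm.differentiable)
  have hGi : Integrable (e ∘ F ∘ e.symm) :=
    e.toContinuousLinearMap.integrable_comp ((hmp.integrable_comp_emb hemb).2 hFint)
  have hdivG : Integrable fun x => ∑ i, fderiv ℝ (e ∘ F ∘ e.symm) x (Pi.single i 1) i := by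
    simp only [hdiv]
    exact (hmp.integrable_comp_emb hemb).2 hdivint
  rw [← hmp.integral_comp hemb, ← integral_divergence_eq_zero_of_integrable hG hGi hdivG]
  simp only [hdiv]

/-- If `F : ℝⁿ → ℝⁿ` is a continuously differentiable vector field which is
integrable and whose divergence is integrable, then `∫ div F = 0`. -/
theorem integral_div_eq_zero_of_integrable
    (n : ℕ) (hn : 1 ≤ n)
    (F : EuclideanSpace ℝ (Fin n) → EuclideanSpace ℝ (Fin n))
    (hF : ContDiff ℝ 1 F)
    (hFint : Integrable F volume)
    (hdivint : Integrable
      (fun x => ∑ i : Fin n, fderiv ℝ F x (EuclideanSpace.single i 1) i) volume) :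
    ∫ x : EuclideanSpace ℝ (Fin n),
      ∑ i : Fin n, fderiv ℝ F x (EuclideanSpace.single i 1) i = 0 :=
  integral_div_eq_zero_of_integrable_general n F hF hFint hdivint
end

section
/- Let n ≥ 2 and 1 ≤ k < n. Let ω be a smooth differential k-form on ℝ^n, i.e. a smooth map from ℝ^n to the space of alternating k-linear maps (ℝ^n)^k → ℝ, such that x ↦ ‖ω(x)‖ is integrable on ℝ^n. Assume ω is closed: for all x ∈ ℝ^n and all vectors v_0, v_1, …, v_k ∈ ℝ^n, Σ_{i=0}^{k} (−1)^i (Dω(x)(v_i))(v_0, …, v̂_i, …, v_k) = 0, where Dω(x) is the Fréchet derivative of ω at x and v̂_i means v_i is omitted. Then for all vectors v_1, …, v_k ∈ ℝ^n, ∫_{ℝ^n} ω(x)(v_1, …, v_k) dx = 0. -/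
open MeasureTheory Metric Filter Function Topology

set_option maxHeartbeats 2000000

theorem aux_integral_fderiv_eq_zero {E : Type*} [NormedAddCommGroup E] [NormedSpace ℝ E]
    [MeasurableSpace E] [BorelSpace E] [FiniteDimensional ℝ E]
    (μ : Measure E) [μ.IsAddHaarMeasure] {f : E → ℝ}
    (hf : ContDiff ℝ ((⊤ : ℕ∞) : WithTop ℕ∞) f) (hsupp : HasCompactSupport f) (w : E) :
    ∫ x, fderiv ℝ f x w ∂μ = 0 := by
  obtain ⟨C, hC⟩ := ContDiff.lipschitzWith_of_hasCompactSupport hsupp hf (by simp)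
  obtain ⟨r, hr⟩ := hsupp.isBounded.subset_closedBall 0
  have hρ0 : (0:ℝ) < max r 0 + 1 := by positivity
  set ρ : ℝ := max r 0 + 1 with hρdef
  let g : ContDiffBump (0 : E) := ⟨ρ, ρ + 1, hρ0, by linarith⟩
  obtain ⟨D, hD⟩ := ContDiff.lipschitzWith_of_hasCompactSupport g.hasCompactSupport g.contDiff one_ne_zero
  have key := hC.integral_lineDeriv_mul_eq hD g.hasCompactSupport w (μ := μ)
  have e1 : (fun x => lineDeriv ℝ f x w * g x) = fun x => fderiv ℝ f x w := by
    funext x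
    by_cases hx : x ∈ tsupport f
    · have hg1 : g x = 1 := g.one_of_mem_closedBall <| by
        have := hr hx
        simp only [mem_closedBall] at this ⊢
        have : dist x 0 ≤ r := this
        calc dist x 0 ≤ r := this
          _ ≤ ρ := by rw [hρdef]; have := le_max_left r 0; linarith
      rw [hg1, mul_one, (hf.differentiable (by simp) x).lineDeriv_eq_fderiv]
    · have h0 : fderiv ℝ f x = 0 := by
        by_contra hne
        exact hx (support_fderiv_subset ℝ (Function.mem_support.mpr hne))
      rw [(hf.differentiable (by simp) x).lineDeriv_eq_fderiv, h0]
      simp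
  have e2 : (fun x => lineDeriv ℝ (⇑g) x (-w) * f x) = fun _ => (0:ℝ) := by
    funext x
    by_cases hx : x ∈ tsupport f
    · have hxball : x ∈ ball (0:E) ρ := by
        have := hr hx
        simp only [mem_closedBall] at this
        simp only [mem_ball]
        calc dist x 0 ≤ r := this
          _ < ρ := by rw [hρdef]; have := le_max_left r 0; linarith
      have hev : (⇑g) =ᶠ[nhds x] fun _ => (1:ℝ) :=
        Filter.eventuallyEq_of_mem (isOpen_ball.mem_nhds hxball)
          fun z hz => g.one_of_mem_closedBall (ball_subset_closedBall hz)
      have : lineDeriv ℝ (⇑g) x (-w) = 0 := by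
        rw [(g.contDiff.differentiable one_ne_zero x).lineDeriv_eq_fderiv, hev.fderiv_eq]
        simp
      rw [this, zero_mul]
    · rw [image_eq_zero_of_notMem_tsupport hx, mul_zero]
  rw [← e1, key, e2]
  simp

/-- Averages of a closed `L¹` `k`-form on `ℝⁿ` vanish (for `1 ≤ k < n`).
The form is a smooth map `ω` from `ℝⁿ` to continuous `k`-linear alternating
maps; closedness is the vanishing of the exterior derivative
`Σᵢ (-1)ⁱ (Dω(x)(vᵢ))(v₀,…,v̂ᵢ,…,v_k) = 0`. -/
theorem integral_closed_L1_form_eq_zero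
    (n k : ℕ) (hn : 2 ≤ n) (hk1 : 1 ≤ k) (hkn : k < n)
    (ω : EuclideanSpace ℝ (Fin n) →
      (EuclideanSpace ℝ (Fin n) [×k]→L[ℝ] ℝ))
    (hsmooth : ContDiff ℝ (⊤ : ℕ∞) ω)
    (halt : ∀ (x : EuclideanSpace ℝ (Fin n)) (v : Fin k → EuclideanSpace ℝ (Fin n))
      (i j : Fin k), i ≠ j → v i = v j → ω x v = 0)
    (hint : Integrable (fun x => ‖ω x‖) volume)
    (hclosed : ∀ (x : EuclideanSpace ℝ (Fin n))
      (v : Fin (k + 1) → EuclideanSpace ℝ (Fin n)),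
      ∑ i : Fin (k + 1), (-1 : ℝ) ^ (i : ℕ) *
        (fderiv ℝ ω x (v i)) (fun j : Fin k => v (i.succAbove j)) = 0) :
    ∀ v : Fin k → EuclideanSpace ℝ (Fin n),
      ∫ x : EuclideanSpace ℝ (Fin n), ω x v = 0 := by
  classical
  intro v
  have hωdiff : Differentiable ℝ ω := hsmooth.differentiable (by simp)
  -- Step 1: a vector u orthogonal to all v j, and a functional ℓ
  have hspan : Submodule.span ℝ (Set.range v) ≠ ⊤ := by
    intro htop
    have h1 : (Set.range v).finrank ℝ ≤ k := by
      simpa using finrank_range_le_card v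
    have h2 : (Set.range v).finrank ℝ = n := by
      rw [Set.finrank, htop, finrank_top, finrank_euclideanSpace_fin]
    omega
  obtain ⟨u, huS, hu0⟩ : ∃ u, u ∈ (Submodule.span ℝ (Set.range v))ᗮ ∧ u ≠ 0 :=
    Submodule.exists_mem_ne_zero_of_ne_bot fun h =>
      hspan (Submodule.orthogonal_eq_bot_iff.mp h)
  set ℓ : EuclideanSpace ℝ (Fin n) →L[ℝ] ℝ := ((‖u‖ : ℝ) ^ 2)⁻¹ • innerSL ℝ u with hℓdef
  have hℓu : ℓ u = 1 := by
    simp only [hℓdef, ContinuousLinearMap.smul_apply, innerSL_apply_apply, smul_eq_mul]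
    rw [real_inner_self_eq_norm_sq]
    exact inv_mul_cancel₀ (pow_ne_zero 2 (norm_ne_zero_iff.mpr hu0))
  have hℓv : ∀ j, ℓ (v j) = 0 := by
    intro j
    have : inner ℝ (v j) u = (0 : ℝ) :=
      (Submodule.mem_orthogonal _ u).mp huS (v j)
        (Submodule.subset_span (Set.mem_range_self j))
    simp only [hℓdef, ContinuousLinearMap.smul_apply, innerSL_apply_apply, smul_eq_mul]
    rw [real_inner_comm, this, mul_zero]
  -- Step 2: the extended family and the component functions
  set V : Fin (k + 1) → EuclideanSpace ℝ (Fin n) := Fin.cons u v with hVdef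
  set h : Fin (k + 1) → EuclideanSpace ℝ (Fin n) → ℝ :=
    fun i x => ω x (fun m => V (i.succAbove m)) with hhdef
  have hh0 : ∀ x, h 0 x = ω x v := by
    intro x
    simp only [hhdef]
    congr 1
  have hsm : ∀ i, ContDiff ℝ ((⊤ : ℕ∞) : WithTop ℕ∞) (h i) := by
    intro i
    exact (ContinuousMultilinearMap.apply ℝ (fun _ : Fin k => EuclideanSpace ℝ (Fin n)) ℝ
      (fun m => V (i.succAbove m))).contDiff.comp (hsmooth.of_le (by simp))
  have hdiffh : ∀ i, Differentiable ℝ (h i) := fun i => (hsm i).differentiable (by simp)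
  have hfd : ∀ (i : Fin (k+1)) x, fderiv ℝ (h i) x (V i) =
      (fderiv ℝ ω x (V i)) (fun m => V (i.succAbove m)) := by
    intro i x
    exact fderiv_continuousMultilinear_apply_const_apply (hωdiff x) _ _
  have hboundh : ∀ (i : Fin (k+1)) x, ‖h i x‖ ≤ ‖ω x‖ * ∏ m, ‖V (i.succAbove m)‖ :=
    fun i x => (ω x).le_opNorm _
  -- Step 3: the bump function
  set ζ : ContDiffBump (0 : EuclideanSpace ℝ (Fin n)) := ⟨1, 2, one_pos, one_lt_two⟩ with hζdef
  have hζsm : ContDiff ℝ ((⊤ : ℕ∞) : WithTop ℕ∞) (⇑ζ) := ζ.contDiff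
  obtain ⟨M, hM⟩ : ∃ M, ∀ y, ‖fderiv ℝ (⇑ζ) y‖ ≤ M :=
    (ζ.hasCompactSupport.fderiv (𝕜 := ℝ)).exists_bound_of_continuous
      (hζsm.continuous_fderiv (by simp))
  have hM0 : 0 ≤ M := le_trans (norm_nonneg _) (hM 0)
  have hζfar : ∀ y : EuclideanSpace ℝ (Fin n), 2 < ‖y‖ → fderiv ℝ (⇑ζ) y = 0 := by
    intro y hy
    by_contra hne
    have hmem : y ∈ tsupport (⇑ζ) := support_fderiv_subset ℝ (Function.mem_support.mpr hne)
    rw [ζ.tsupport_eq] at hmem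
    simp only [mem_closedBall, dist_zero_right] at hmem
    linarith
  have hζnear : ∀ y : EuclideanSpace ℝ (Fin n), ‖y‖ < 1 → fderiv ℝ (⇑ζ) y = 0 := by
    intro y hy
    have hev : (⇑ζ) =ᶠ[nhds y] fun _ => (1 : ℝ) :=
      Filter.eventuallyEq_of_mem (isOpen_ball.mem_nhds (by simpa [mem_ball, dist_zero_right]))
        fun z hz => ζ.one_of_mem_closedBall (ball_subset_closedBall hz)
    rw [hev.fderiv_eq]
    simp
  -- Step 4: key identity
  have hkey : ∀ R : ℝ, 0 < R →
      (∫ x, h 0 x * ζ (R⁻¹ • x)) =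
        - ∑ i : Fin (k + 1), (-1 : ℝ) ^ (i : ℕ) *
          ∫ x, h i x * (ℓ x * (R⁻¹ * fderiv ℝ (⇑ζ) (R⁻¹ • x) (V i))) := by
    intro R hR
    have hζRsm : ContDiff ℝ ((⊤ : ℕ∞) : WithTop ℕ∞)
        (fun x : EuclideanSpace ℝ (Fin n) => ζ (R⁻¹ • x)) :=
      hζsm.comp (contDiff_const_smul _)
    have hζRd : ∀ x : EuclideanSpace ℝ (Fin n), HasFDerivAt (fun y => ζ (R⁻¹ • y))
        (R⁻¹ • fderiv ℝ (⇑ζ) (R⁻¹ • x)) x := by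
      intro x
      have h1 : HasFDerivAt (fun y : EuclideanSpace ℝ (Fin n) => R⁻¹ • y)
          (R⁻¹ • ContinuousLinearMap.id ℝ (EuclideanSpace ℝ (Fin n))) x :=
        (hasFDerivAt_id x).const_smul R⁻¹
      have h2 : HasFDerivAt (⇑ζ) (fderiv ℝ (⇑ζ) (R⁻¹ • x)) (R⁻¹ • x) :=
        ((hζsm.differentiable (by simp)) (R⁻¹ • x)).hasFDerivAt
      have h3 := h2.comp x h1
      refine h3.congr_fderiv ?_
      ext w
      simp
    have hcont_fh : ∀ i : Fin (k + 1),
        Continuous (fun x => fderiv ℝ (h i) x (V i)) := fun i =>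
      ((hsm i).continuous_fderiv (by simp)).clm_apply continuous_const
    have hcont_fζ : Continuous (fun x : EuclideanSpace ℝ (Fin n) =>
        fderiv ℝ (⇑ζ) (R⁻¹ • x)) :=
      (hζsm.continuous_fderiv (by simp)).comp (continuous_const_smul _)
    have hζRsupp : HasCompactSupport
        (fun x : EuclideanSpace ℝ (Fin n) => ζ (R⁻¹ • x)) := by
      apply HasCompactSupport.intro
        (isCompact_closedBall (0 : EuclideanSpace ℝ (Fin n)) (2 * R))
      intro x hx
      apply ζ.zero_of_le_dist
      simp only [mem_closedBall, dist_zero_right, not_le] at hx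
      have h2 : ζ.rOut = 2 := rfl
      rw [h2, dist_zero_right, norm_smul, norm_inv, Real.norm_eq_abs, abs_of_pos hR,
        inv_mul_eq_div, le_div_iff₀ hR]
      linarith
    have hDsupp : HasCompactSupport (fun x : EuclideanSpace ℝ (Fin n) =>
        fderiv ℝ (⇑ζ) (R⁻¹ • x)) := by
      apply HasCompactSupport.intro
        (isCompact_closedBall (0 : EuclideanSpace ℝ (Fin n)) (2 * R))
      intro x hx
      simp only [mem_closedBall, dist_zero_right, not_le] at hx
      apply hζfar
      rw [norm_smul, norm_inv, Real.norm_eq_abs, abs_of_pos hR, inv_mul_eq_div,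
        lt_div_iff₀ hR]
      linarith
    set A : Fin (k + 1) → ℝ :=
      fun i => ∫ x, (ℓ x * ζ (R⁻¹ • x)) * fderiv ℝ (h i) x (V i) with hAdef
    set B : Fin (k + 1) → ℝ :=
      fun i => ∫ x, h i x * (ζ (R⁻¹ • x) * ℓ (V i)) with hBdef
    set C : Fin (k + 1) → ℝ :=
      fun i => ∫ x, h i x * (ℓ x * (R⁻¹ * fderiv ℝ (⇑ζ) (R⁻¹ • x) (V i))) with hCdef
    have hAint : ∀ i : Fin (k + 1),
        Integrable (fun x => (ℓ x * ζ (R⁻¹ • x)) * fderiv ℝ (h i) x (V i)) := by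
      intro i
      apply Continuous.integrable_of_hasCompactSupport
      · exact (ℓ.continuous.mul hζRsm.continuous).mul (hcont_fh i)
      · exact (hζRsupp.mul_left).mul_right
    have hBint : ∀ i : Fin (k + 1),
        Integrable (fun x => h i x * (ζ (R⁻¹ • x) * ℓ (V i))) := by
      intro i
      apply Continuous.integrable_of_hasCompactSupport
      · exact (hsm i).continuous.mul (hζRsm.continuous.mul continuous_const)
      · exact (hζRsupp.mul_right).mul_left
    have hCint : ∀ i : Fin (k + 1),
        Integrable (fun x =>
          h i x * (ℓ x * (R⁻¹ * fderiv ℝ (⇑ζ) (R⁻¹ • x) (V i)))) := by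
      intro i
      apply Continuous.integrable_of_hasCompactSupport
      · exact (hsm i).continuous.mul (ℓ.continuous.mul (continuous_const.mul
          (hcont_fζ.clm_apply continuous_const)))
      · have : HasCompactSupport (fun x : EuclideanSpace ℝ (Fin n) =>
            fderiv ℝ (⇑ζ) (R⁻¹ • x) (V i)) := by
          apply HasCompactSupport.intro
            (isCompact_closedBall (0 : EuclideanSpace ℝ (Fin n)) (2 * R))
          intro x hx
          have hz : fderiv ℝ (⇑ζ) (R⁻¹ • x) = 0 := by
            simp only [mem_closedBall, dist_zero_right, not_le] at hx
            apply hζfar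
            rw [norm_smul, norm_inv, Real.norm_eq_abs, abs_of_pos hR, inv_mul_eq_div,
              lt_div_iff₀ hR]
            linarith
          rw [hz]
          simp
        exact ((this.mul_left).mul_left).mul_left
    have hIBP : ∀ i : Fin (k + 1), A i + B i + C i = 0 := by
      intro i
      have hFsm : ContDiff ℝ ((⊤ : ℕ∞) : WithTop ℕ∞)
          (fun x => h i x * (ℓ x * ζ (R⁻¹ • x))) :=
        (hsm i).mul (ℓ.contDiff.mul hζRsm)
      have hFsupp : HasCompactSupport (fun x => h i x * (ℓ x * ζ (R⁻¹ • x))) :=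
        (hζRsupp.mul_left).mul_left
      have h0 := aux_integral_fderiv_eq_zero volume hFsm hFsupp (V i)
      have hexp : ∀ x, fderiv ℝ (fun y => h i y * (ℓ y * ζ (R⁻¹ • y))) x (V i)
          = (ℓ x * ζ (R⁻¹ • x)) * fderiv ℝ (h i) x (V i)
            + h i x * (ζ (R⁻¹ • x) * ℓ (V i))
            + h i x * (ℓ x * (R⁻¹ * fderiv ℝ (⇑ζ) (R⁻¹ • x) (V i))) := by
        intro x
        have hg : HasFDerivAt (fun y => ℓ y * ζ (R⁻¹ • y))
            (ℓ x • (R⁻¹ • fderiv ℝ (⇑ζ) (R⁻¹ • x)) + ζ (R⁻¹ • x) • (ℓ : EuclideanSpace ℝ (Fin n) →L[ℝ] ℝ)) x :=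
          (ℓ.hasFDerivAt).mul (hζRd x)
        have hF : HasFDerivAt (fun y => h i y * (ℓ y * ζ (R⁻¹ • y)))
            (h i x • (ℓ x • (R⁻¹ • fderiv ℝ (⇑ζ) (R⁻¹ • x)) + ζ (R⁻¹ • x) • (ℓ : EuclideanSpace ℝ (Fin n) →L[ℝ] ℝ))
              + (ℓ x * ζ (R⁻¹ • x)) • fderiv ℝ (h i) x) x :=
          ((hdiffh i) x).hasFDerivAt.mul hg
        rw [hF.fderiv]
        simp only [ContinuousLinearMap.add_apply, ContinuousLinearMap.smul_apply,
          smul_eq_mul]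
        ring
      simp only [hexp] at h0
      have e2 : (∫ x, ℓ x * ζ (R⁻¹ • x) * fderiv ℝ (h i) x (V i)
            + h i x * (ζ (R⁻¹ • x) * ℓ (V i))) = A i + B i :=
        integral_add (hAint i) (hBint i)
      have e1 : (∫ x, (ℓ x * ζ (R⁻¹ • x) * fderiv ℝ (h i) x (V i)
            + h i x * (ζ (R⁻¹ • x) * ℓ (V i)))
            + h i x * (ℓ x * (R⁻¹ * fderiv ℝ (⇑ζ) (R⁻¹ • x) (V i))))
          = (∫ x, ℓ x * ζ (R⁻¹ • x) * fderiv ℝ (h i) x (V i)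
            + h i x * (ζ (R⁻¹ • x) * ℓ (V i))) + C i :=
        integral_add ((hAint i).add (hBint i)) (hCint i)
      rw [← e2, ← e1]
      exact h0
    have hS1 : ∑ i : Fin (k + 1), (-1 : ℝ) ^ (i : ℕ) * A i = 0 := by
      have e1 : ∀ i : Fin (k + 1), (-1 : ℝ) ^ (i : ℕ) * A i
          = ∫ x, (-1 : ℝ) ^ (i : ℕ) *
              ((ℓ x * ζ (R⁻¹ • x)) * fderiv ℝ (h i) x (V i)) := by
        intro i
        rw [hAdef]
        exact (integral_const_mul _ _).symm
      rw [Finset.sum_congr rfl fun i _ => e1 i,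
        ← integral_finset_sum _ fun i _ => (hAint i).const_mul _]
      have e2 : ∀ x : EuclideanSpace ℝ (Fin n),
          ∑ i : Fin (k + 1), (-1 : ℝ) ^ (i : ℕ) *
            ((ℓ x * ζ (R⁻¹ • x)) * fderiv ℝ (h i) x (V i)) = 0 := by
        intro x
        have e3 : ∑ i : Fin (k + 1), (-1 : ℝ) ^ (i : ℕ) *
            ((ℓ x * ζ (R⁻¹ • x)) * fderiv ℝ (h i) x (V i))
            = (ℓ x * ζ (R⁻¹ • x)) * ∑ i : Fin (k + 1), (-1 : ℝ) ^ (i : ℕ) *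
              ((fderiv ℝ ω x (V i)) fun m => V (i.succAbove m)) := by
          rw [Finset.mul_sum]
          exact Finset.sum_congr rfl fun i _ => by rw [hfd i x]; ring
        rw [e3, hclosed x V, mul_zero]
      simp only [e2]
      exact integral_zero _ _
    have hS2 : ∑ i : Fin (k + 1), (-1 : ℝ) ^ (i : ℕ) * B i
        = ∫ x, h 0 x * ζ (R⁻¹ • x) := by
      rw [Fin.sum_univ_succ]
      have hz : ∀ j : Fin k, B j.succ = 0 := by
        intro j
        have hl : ℓ (V j.succ) = 0 := by
          rw [hVdef]
          simp only [Fin.cons_succ]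
          exact hℓv j
        rw [hBdef]
        simp [hl]
      have hone : ℓ (V 0) = 1 := by
        rw [hVdef]
        simp only [Fin.cons_zero]
        exact hℓu
      simp only [hz, mul_zero, Finset.sum_const_zero, add_zero]
      rw [hBdef]
      simp [hone]
    rw [← hS2]
    have e4 : ∀ i ∈ Finset.univ, (-1 : ℝ) ^ ((i : Fin (k+1)) : ℕ) * B i
        = -((-1 : ℝ) ^ (i : ℕ) * A i) + -((-1 : ℝ) ^ (i : ℕ) * C i) := by
      intro i _
      have := hIBP i
      have hBi : B i = -A i - C i := by linarith
      rw [hBi]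
      ring
    rw [Finset.sum_congr rfl e4, Finset.sum_add_distrib, Finset.sum_neg_distrib,
      Finset.sum_neg_distrib, hS1, neg_zero, zero_add]
  -- Step 5: limits
  have hQ : ∀ i : Fin (k + 1), (0:ℝ) ≤ ∏ m : Fin k, ‖V (i.succAbove m)‖ :=
    fun i => Finset.prod_nonneg fun m _ => norm_nonneg _
  have tendA : Tendsto (fun m : ℕ => ∫ x, h 0 x * ζ (((m : ℝ) + 1)⁻¹ • x)) atTop
      (𝓝 (∫ x, h 0 x)) := by
    apply tendsto_integral_of_dominated_convergence
      (fun x => ‖ω x‖ * ∏ m : Fin k, ‖V ((0 : Fin (k+1)).succAbove m)‖)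
    · intro m
      exact ((hsm 0).continuous.mul
        (hζsm.continuous.comp (continuous_const_smul _))).aestronglyMeasurable
    · exact hint.mul_const _
    · intro m
      filter_upwards with x
      rw [norm_mul]
      calc ‖h 0 x‖ * ‖(ζ (((m : ℝ) + 1)⁻¹ • x) : ℝ)‖
          ≤ (‖ω x‖ * ∏ m : Fin k, ‖V ((0 : Fin (k+1)).succAbove m)‖) * 1 := by
            apply mul_le_mul (hboundh 0 x) ?_ (norm_nonneg _)
              (by positivity)
            rw [Real.norm_eq_abs, abs_of_nonneg ζ.nonneg]
            exact ζ.le_one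
        _ = ‖ω x‖ * ∏ m : Fin k, ‖V ((0 : Fin (k+1)).succAbove m)‖ := mul_one _
    · filter_upwards with x
      have hev : (fun m : ℕ => h 0 x * ζ (((m : ℝ) + 1)⁻¹ • x))
          =ᶠ[atTop] fun _ => h 0 x := by
        filter_upwards [eventually_ge_atTop ⌈‖x‖⌉₊] with m hm
        have hpos : (0:ℝ) < (m : ℝ) + 1 := by positivity
        have hj : ζ (((m : ℝ) + 1)⁻¹ • x) = 1 := by
          apply ζ.one_of_mem_closedBall
          rw [mem_closedBall, dist_zero_right, norm_smul, norm_inv, Real.norm_eq_abs,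
            abs_of_pos hpos, inv_mul_eq_div]
          have h1 : ζ.rIn = 1 := rfl
          rw [h1, div_le_one hpos]
          calc ‖x‖ ≤ (⌈‖x‖⌉₊ : ℝ) := Nat.le_ceil _
            _ ≤ (m : ℝ) := by exact_mod_cast hm
            _ ≤ (m : ℝ) + 1 := by linarith
        rw [hj, mul_one]
      exact Filter.Tendsto.congr' hev.symm tendsto_const_nhds
  have tendC : ∀ i : Fin (k + 1), Tendsto (fun m : ℕ =>
      ∫ x, h i x * (ℓ x * (((m : ℝ) + 1)⁻¹ *
        fderiv ℝ (⇑ζ) (((m : ℝ) + 1)⁻¹ • x) (V i)))) atTop (𝓝 0) := by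
    intro i
    have key := tendsto_integral_of_dominated_convergence
      (F := fun (m : ℕ) x => h i x * (ℓ x * (((m : ℝ) + 1)⁻¹ *
        fderiv ℝ (⇑ζ) (((m : ℝ) + 1)⁻¹ • x) (V i))))
      (f := fun _ => (0:ℝ)) (μ := volume)
      (bound := fun x => ‖ω x‖ *
        ((∏ m : Fin k, ‖V (i.succAbove m)‖) * (‖ℓ‖ * (2 * (M * ‖V i‖)))))
      ?_ ?_ ?_ ?_
    · simpa using key
    · intro m
      apply Continuous.aestronglyMeasurable
      exact (hsm i).continuous.mul (ℓ.continuous.mul (continuous_const.mul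
        ((((hζsm.continuous_fderiv (by simp)).comp
          (continuous_const_smul _))).clm_apply continuous_const)))
    · exact hint.mul_const _
    · intro m
      filter_upwards with x
      have hpos : (0:ℝ) < (m : ℝ) + 1 := by positivity
      set R : ℝ := (m : ℝ) + 1 with hRdef
      by_cases hx2 : ‖x‖ ≤ 2 * R
      · have hd : ‖(fderiv ℝ (⇑ζ) (R⁻¹ • x)) (V i)‖ ≤ M * ‖V i‖ :=
          le_trans ((fderiv ℝ (⇑ζ) (R⁻¹ • x)).le_opNorm (V i))
            (mul_le_mul_of_nonneg_right (hM _) (norm_nonneg _))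
        have k1 : R⁻¹ * ‖x‖ ≤ 2 := by
          rw [inv_mul_eq_div, div_le_iff₀ hpos]
          linarith
        calc ‖h i x * (ℓ x * (R⁻¹ * (fderiv ℝ (⇑ζ) (R⁻¹ • x)) (V i)))‖
            = ‖h i x‖ * ‖ℓ x‖ * (R⁻¹ * ‖(fderiv ℝ (⇑ζ) (R⁻¹ • x)) (V i)‖) := by
              rw [norm_mul, norm_mul, norm_mul, Real.norm_eq_abs R⁻¹,
                abs_of_pos (inv_pos.mpr hpos)]
              ring
          _ ≤ (‖ω x‖ * ∏ m : Fin k, ‖V (i.succAbove m)‖) * (‖ℓ‖ * ‖x‖)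
              * (R⁻¹ * (M * ‖V i‖)) := by
              apply mul_le_mul (mul_le_mul (hboundh i x) (ℓ.le_opNorm x)
                (norm_nonneg _) (by positivity))
                (mul_le_mul_of_nonneg_left hd (le_of_lt (inv_pos.mpr hpos)))
                (by positivity) (by positivity)
          _ = ((‖ω x‖ * ∏ m : Fin k, ‖V (i.succAbove m)‖) * ‖ℓ‖ * (M * ‖V i‖))
              * (R⁻¹ * ‖x‖) := by ring
          _ ≤ ((‖ω x‖ * ∏ m : Fin k, ‖V (i.succAbove m)‖) * ‖ℓ‖ * (M * ‖V i‖)) * 2 := by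
              apply mul_le_mul_of_nonneg_left k1
              have := hQ i
              positivity
          _ = ‖ω x‖ * ((∏ m : Fin k, ‖V (i.succAbove m)‖) * (‖ℓ‖ * (2 * (M * ‖V i‖)))) := by
              ring
      · have hz : fderiv ℝ (⇑ζ) (R⁻¹ • x) = 0 := by
          apply hζfar
          rw [norm_smul, norm_inv, Real.norm_eq_abs, abs_of_pos hpos, inv_mul_eq_div,
            lt_div_iff₀ hpos]
          linarith
        rw [hz]
        simp only [ContinuousLinearMap.zero_apply, mul_zero, norm_zero]
        have := hQ i
        positivity
    · filter_upwards with x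
      have hev : (fun m : ℕ => h i x * (ℓ x * (((m : ℝ) + 1)⁻¹ *
            fderiv ℝ (⇑ζ) (((m : ℝ) + 1)⁻¹ • x) (V i)))) =ᶠ[atTop] fun _ => (0:ℝ) := by
        filter_upwards [eventually_ge_atTop ⌈‖x‖⌉₊] with m hm
        have hpos : (0:ℝ) < (m : ℝ) + 1 := by positivity
        have hz : fderiv ℝ (⇑ζ) (((m : ℝ) + 1)⁻¹ • x) = 0 := by
          apply hζnear
          rw [norm_smul, norm_inv, Real.norm_eq_abs, abs_of_pos hpos, inv_mul_eq_div,
            div_lt_one hpos]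
          calc ‖x‖ ≤ (⌈‖x‖⌉₊ : ℝ) := Nat.le_ceil _
            _ ≤ (m : ℝ) := by exact_mod_cast hm
            _ < (m : ℝ) + 1 := by linarith
        rw [hz]
        simp
      exact Filter.Tendsto.congr' hev.symm tendsto_const_nhds
  have tendB : Tendsto (fun m : ℕ => ∫ x, h 0 x * ζ (((m : ℝ) + 1)⁻¹ • x)) atTop (𝓝 0) := by
    have hsum : Tendsto (fun m : ℕ => ∑ i : Fin (k + 1), (-1 : ℝ) ^ (i : ℕ) *
        ∫ x, h i x * (ℓ x * (((m : ℝ) + 1)⁻¹ *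
          fderiv ℝ (⇑ζ) (((m : ℝ) + 1)⁻¹ • x) (V i)))) atTop
        (𝓝 (∑ i : Fin (k + 1), (-1 : ℝ) ^ (i : ℕ) * 0)) :=
      tendsto_finset_sum _ fun i _ => (tendC i).const_mul _
    have hsum' := hsum.neg
    simp only [mul_zero, Finset.sum_const_zero, neg_zero] at hsum'
    apply hsum'.congr
    intro m
    exact (hkey ((m : ℝ) + 1) (by positivity)).symm
  have hfinal : ∫ x, h 0 x = 0 := tendsto_nhds_unique tendA tendB
  rw [← hfinal]
  apply integral_congr_ae
  filter_upwards with x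
  exact (hh0 x).symm
end

section
/- Let n ≥ 2 and let a : ℝ^n → ℝ^n be a smooth map whose components a_1, …, a_n are all integrable on ℝ^n and which satisfies the closedness condition ∂a_i/∂x_j = ∂a_j/∂x_i for all i, j (equivalently, the Jacobian matrix of a is symmetric at every point). Then ∫_{ℝ^n} a_i(x) dx = 0 for every i = 1, …, n. -/
open MeasureTheory Filter Topology Metric Pointwise

section AuxClosedOneForm

/-- Integral of a directional derivative of a smooth compactly supported function vanishes. -/
lemma aux_integral_fderiv_zero {n : ℕ} (g : EuclideanSpace ℝ (Fin n) → ℝ)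
    (hg : ContDiff ℝ (⊤ : ℕ∞) g) (hsupp : HasCompactSupport g) (v : EuclideanSpace ℝ (Fin n)) :
    ∫ x, fderiv ℝ g x v = 0 := by
  classical
  obtain ⟨C, hC⟩ := (hsupp.fderiv (𝕜 := ℝ)).exists_bound_of_continuous
    (hg.continuous_fderiv (by simp))
  have hC0 : 0 ≤ C := le_trans (norm_nonneg _) (hC 0)
  set K : Set (EuclideanSpace ℝ (Fin n)) := tsupport g + closedBall (0 : EuclideanSpace ℝ (Fin n)) ‖v‖ with hKdef
  have hK : IsCompact K := IsCompact.add hsupp (isCompact_closedBall (0 : EuclideanSpace ℝ (Fin n)) ‖v‖)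
  set t : ℕ → ℝ := fun k => 1 / (k + 1 : ℝ) with htdef
  have ht0 : ∀ k, 0 < t k := fun k => by positivity
  have htle : ∀ k, t k ≤ 1 := fun k => by
    rw [htdef]
    rw [div_le_one (by positivity)]
    linarith [Nat.cast_nonneg (α := ℝ) k]
  have htt : Tendsto t atTop (𝓝 0) := tendsto_one_div_add_atTop_nhds_zero_nat
  set F : ℕ → EuclideanSpace ℝ (Fin n) → ℝ :=
    fun k x => (g (x + t k • v) - g x) / t k with hFdef
  have hdiff : Differentiable ℝ g := hg.differentiable (by simp)
  -- MVT bound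
  have hlip : ∀ x y : EuclideanSpace ℝ (Fin n), ‖g y - g x‖ ≤ C * ‖y - x‖ := fun x y =>
    Convex.norm_image_sub_le_of_norm_fderiv_le (fun z _ => hdiff z)
      (fun z _ => hC z) convex_univ trivial trivial
  have h_meas : ∀ k, AEStronglyMeasurable (F k) volume := fun k =>
    (((hg.continuous.comp (continuous_id.add continuous_const)).sub
      hg.continuous).div_const _).aestronglyMeasurable
  have h_bound : ∀ k, ∀ᵐ x, ‖F k x‖ ≤ K.indicator (fun _ => C * ‖v‖) x := by
    intro k
    filter_upwards with x
    by_cases hx : x ∈ K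
    · rw [Set.indicator_of_mem hx]
      have h1 : ‖g (x + t k • v) - g x‖ ≤ C * ‖t k • v‖ := by
        simpa using hlip x (x + t k • v)
      rw [hFdef]
      simp only [norm_div, Real.norm_eq_abs, abs_of_pos (ht0 k)]
      rw [div_le_iff₀ (ht0 k)]
      calc ‖g (x + t k • v) - g x‖ ≤ C * ‖t k • v‖ := h1
        _ = C * ‖v‖ * t k := by
            rw [norm_smul, Real.norm_eq_abs, abs_of_pos (ht0 k)]; ring
    · rw [Set.indicator_of_notMem hx]
      have hgx : g x = 0 := by
        by_contra h
        exact hx (by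
          have h1 : x ∈ tsupport g := subset_tsupport g h
          have h2 : x + (0 : EuclideanSpace ℝ (Fin n)) ∈ K :=
            Set.add_mem_add h1 (mem_closedBall_self (norm_nonneg v))
          simpa using h2)
      have hgx2 : g (x + t k • v) = 0 := by
        by_contra h
        apply hx
        have h1 : x + t k • v ∈ tsupport g := subset_tsupport g h
        have h2 : -(t k • v) ∈ closedBall (0 : EuclideanSpace ℝ (Fin n)) ‖v‖ := by
          simp only [mem_closedBall, dist_zero_right, norm_neg, norm_smul, Real.norm_eq_abs,
            abs_of_pos (ht0 k)]
          calc t k * ‖v‖ ≤ 1 * ‖v‖ := by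
                apply mul_le_mul_of_nonneg_right (htle k) (norm_nonneg v)
            _ = ‖v‖ := one_mul _
        have h3 : (x + t k • v) + -(t k • v) ∈ K := Set.add_mem_add h1 h2
        simpa using h3
      simp [hFdef, hgx, hgx2]
  have bound_int : Integrable (K.indicator (fun _ => C * ‖v‖)) volume := by
    rw [integrable_indicator_iff hK.measurableSet]
    exact integrableOn_const hK.measure_lt_top.ne
  have h_lim : ∀ᵐ x, Tendsto (fun k => F k x) atTop (𝓝 (fderiv ℝ g x v)) := by
    filter_upwards with x
    have hc : HasDerivAt (fun s : ℝ => x + s • v) v 0 := by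
      simpa using ((hasDerivAt_id (0 : ℝ)).smul_const v).const_add x
    have hgd : HasDerivAt (fun s : ℝ => g (x + s • v)) (fderiv ℝ g x v) 0 := by
      have h1 : HasFDerivAt g (fderiv ℝ g ((fun s : ℝ => x + s • v) 0))
          ((fun s : ℝ => x + s • v) 0) := (hdiff _).hasFDerivAt
      have := h1.comp_hasDerivAt 0 hc
      simpa [Function.comp_def] using this
    have hslope := hasDerivAt_iff_tendsto_slope.1 hgd
    have htt' : Tendsto t atTop (𝓝[≠] 0) :=
      tendsto_nhdsWithin_of_tendsto_nhds_of_eventually_within t htt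
        (Eventually.of_forall fun k => (ht0 k).ne')
    have := hslope.comp htt'
    refine this.congr fun k => ?_
    simp [slope_def_field, hFdef]
  have key := tendsto_integral_of_dominated_convergence _ h_meas bound_int h_bound h_lim
  have hgint : Integrable g := hg.continuous.integrable_of_hasCompactSupport hsupp
  have hFk : ∀ k, ∫ x, F k x = 0 := by
    intro k
    rw [hFdef]
    simp only
    rw [integral_div]
    rw [integral_sub (hgint.comp_add_right _) hgint]
    rw [integral_add_right_eq_self g (t k • v)]
    simp
  rw [show (fun k => ∫ x, F k x) = fun _ => (0 : ℝ) from funext hFk] at key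
  exact tendsto_nhds_unique key tendsto_const_nhds

/-- Integration by parts against a compactly supported test function. -/
lemma aux_ibp {n : ℕ} (f u : EuclideanSpace ℝ (Fin n) → ℝ) (hf : ContDiff ℝ (⊤ : ℕ∞) f)
    (hu : ContDiff ℝ (⊤ : ℕ∞) u) (husupp : HasCompactSupport u) (v : EuclideanSpace ℝ (Fin n))
    (hfi : Integrable f volume) :
    ∫ x, f x * fderiv ℝ u x v = - ∫ x, fderiv ℝ f x v * u x := by
  have hprod : ContDiff ℝ (⊤ : ℕ∞) (fun x => f x * u x) := hf.mul hu
  have hpsupp : HasCompactSupport (fun x => f x * u x) := husupp.mul_left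
  have h0 := aux_integral_fderiv_zero _ hprod hpsupp v
  have hexp : ∀ x, fderiv ℝ (fun y => f y * u y) x v
      = f x * fderiv ℝ u x v + fderiv ℝ f x v * u x := by
    intro x
    rw [fderiv_fun_mul ((hf.differentiable (by simp)) x) ((hu.differentiable (by simp)) x)]
    simp [mul_comm]
  rw [show (fun x => fderiv ℝ (fun y => f y * u y) x v)
      = fun x => f x * fderiv ℝ u x v + fderiv ℝ f x v * u x from funext hexp] at h0
  have hDu_cont : Continuous fun x => fderiv ℝ u x v :=
    (hu.continuous_fderiv (by simp)).clm_apply continuous_const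
  have hDu_bdd : ∃ C, ∀ x, ‖fderiv ℝ u x v‖ ≤ C := by
    obtain ⟨C, hC⟩ := (husupp.fderiv (𝕜 := ℝ)).exists_bound_of_continuous
      (hu.continuous_fderiv (by simp))
    exact ⟨C * ‖v‖, fun x => le_trans ((fderiv ℝ u x).le_opNorm v)
      (mul_le_mul_of_nonneg_right (hC x) (norm_nonneg v))⟩
  have h1 : Integrable (fun x => f x * fderiv ℝ u x v) volume := by
    have := hfi.bdd_mul hDu_cont.aestronglyMeasurable (Eventually.of_forall hDu_bdd.choose_spec)
    simpa [mul_comm] using this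
  have h2 : Integrable (fun x => fderiv ℝ f x v * u x) volume := by
    apply Continuous.integrable_of_hasCompactSupport
    · exact ((hf.continuous_fderiv (by simp)).clm_apply continuous_const).mul hu.continuous
    · exact husupp.mul_left
  rw [integral_add h1 h2] at h0
  linarith

end AuxClosedOneForm

set_option maxHeartbeats 1000000 in
/-- If `a : ℝⁿ → ℝⁿ` is smooth with integrable components and symmetric
Jacobian (`∂aᵢ/∂xⱼ = ∂aⱼ/∂xᵢ`, i.e. the 1-form `Σ aᵢ dxᵢ` is closed), then all
the averages `∫ aᵢ` vanish. -/
theorem integral_components_eq_zero_of_closed_one_form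
    (n : ℕ) (hn : 2 ≤ n)
    (a : EuclideanSpace ℝ (Fin n) → EuclideanSpace ℝ (Fin n))
    (hsmooth : ContDiff ℝ (⊤ : ℕ∞) a)
    (hint : ∀ i : Fin n, Integrable (fun x => a x i) volume)
    (hclosed : ∀ (x : EuclideanSpace ℝ (Fin n)) (i j : Fin n),
      fderiv ℝ a x (EuclideanSpace.single j 1) i
        = fderiv ℝ a x (EuclideanSpace.single i 1) j) :
    ∀ i : Fin n, ∫ x : EuclideanSpace ℝ (Fin n), a x i = 0 := by
  classical
  intro i
  haveI : Nontrivial (Fin n) := Fin.nontrivial_iff_two_le.2 hn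
  obtain ⟨j, hj⟩ : ∃ j : Fin n, j ≠ i := exists_ne i
  set vi : EuclideanSpace ℝ (Fin n) := EuclideanSpace.single i (1 : ℝ) with hvi
  set vj : EuclideanSpace ℝ (Fin n) := EuclideanSpace.single j (1 : ℝ) with hvj
  -- components of `a` are smooth
  have hcomp : ∀ l : Fin n, ContDiff ℝ (⊤ : ℕ∞) (fun x : EuclideanSpace ℝ (Fin n) => a x l) := fun l =>
    (EuclideanSpace.proj l : EuclideanSpace ℝ (Fin n) →L[ℝ] ℝ).contDiff.comp (hsmooth.of_le (by simp))
  -- derivative of a component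
  have hfd : ∀ (l : Fin n) (x : EuclideanSpace ℝ (Fin n)) (w : EuclideanSpace ℝ (Fin n)),
      fderiv ℝ (fun y : EuclideanSpace ℝ (Fin n) => a y l) x w = fderiv ℝ a x w l := by
    intro l x w
    have h1 : HasFDerivAt a (fderiv ℝ a x) x := ((hsmooth.differentiable (by simp)) x).hasFDerivAt
    have h2 : HasFDerivAt (fun y : EuclideanSpace ℝ (Fin n) => a y l)
        ((EuclideanSpace.proj l : EuclideanSpace ℝ (Fin n) →L[ℝ] ℝ).comp (fderiv ℝ a x)) x :=
      ((EuclideanSpace.proj l : EuclideanSpace ℝ (Fin n) →L[ℝ] ℝ).hasFDerivAt).comp x h1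
    rw [h2.fderiv]
    rfl
  -- the key integration-by-parts identity for test functions
  have hkey : ∀ u : EuclideanSpace ℝ (Fin n) → ℝ, ContDiff ℝ (⊤ : ℕ∞) u → HasCompactSupport u →
      (∫ x, a x i * fderiv ℝ u x vj) = ∫ x, a x j * fderiv ℝ u x vi := by
    intro u hu husupp
    rw [aux_ibp _ u (hcomp i) hu husupp vj (hint i),
        aux_ibp _ u (hcomp j) hu husupp vi (hint j)]
    have : (fun x => fderiv ℝ (fun y : EuclideanSpace ℝ (Fin n) => a y i) x vj * u x)
        = fun x => fderiv ℝ (fun y : EuclideanSpace ℝ (Fin n) => a y j) x vi * u x := by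
      funext x
      rw [hfd i x vj, hfd j x vi, hvi, hvj, hclosed x i j]
    rw [this]
  -- bump function
  set ψ : ContDiffBump (0 : EuclideanSpace ℝ (Fin n)) := ⟨1, 2, one_pos, one_lt_two⟩ with hψ
  have hψc : ContDiff ℝ (⊤ : ℕ∞) (fun y : EuclideanSpace ℝ (Fin n) => ψ y) := ψ.contDiff
  have hψsupp : HasCompactSupport (fun y : EuclideanSpace ℝ (Fin n) => ψ y) := ψ.hasCompactSupport
  obtain ⟨Cψ, hCψ⟩ := (hψsupp.fderiv (𝕜 := ℝ)).exists_bound_of_continuous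
    (hψc.continuous_fderiv (by simp))
  have hCψ0 : 0 ≤ Cψ := le_trans (norm_nonneg _) (hCψ 0)
  have hDψ : ∀ (y w : EuclideanSpace ℝ (Fin n)), |fderiv ℝ (fun y : EuclideanSpace ℝ (Fin n) => ψ y) y w| ≤ Cψ * ‖w‖ := fun y w =>
    le_trans ((fderiv ℝ (fun y : EuclideanSpace ℝ (Fin n) => ψ y) y).le_opNorm w)
      (mul_le_mul_of_nonneg_right (hCψ y) (norm_nonneg w))
  -- scaling sequence
  set c : ℕ → ℝ := fun k => 1 / (k + 1 : ℝ) with hc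
  have hc0 : ∀ k, 0 < c k := fun k => by positivity
  have hcle : ∀ k, c k ≤ 1 := fun k => by
    rw [hc, div_le_one (by positivity)]
    linarith [Nat.cast_nonneg (α := ℝ) k]
  have hct : Tendsto c atTop (𝓝 0) := tendsto_one_div_add_atTop_nhds_zero_nat
  -- derivative of sine part
  have hsin : ∀ (t : ℝ) (x : EuclideanSpace ℝ (Fin n)), HasFDerivAt (fun y : EuclideanSpace ℝ (Fin n) => Real.sin (t * y j))
      (Real.cos (t * x j) • (t • (EuclideanSpace.proj j : EuclideanSpace ℝ (Fin n) →L[ℝ] ℝ))) x := by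
    intro t x
    have h1 : HasFDerivAt (fun y : EuclideanSpace ℝ (Fin n) => t * y j)
        (t • (EuclideanSpace.proj j : EuclideanSpace ℝ (Fin n) →L[ℝ] ℝ)) x := by
      have := (t • (EuclideanSpace.proj j : EuclideanSpace ℝ (Fin n) →L[ℝ] ℝ)).hasFDerivAt (x := x)
      simpa [Pi.smul_def] using this
    exact (Real.hasDerivAt_sin (t * x j)).comp_hasFDerivAt x h1
  -- derivative of rescaled bump
  have hχ : ∀ (s : ℝ) (x : EuclideanSpace ℝ (Fin n)), HasFDerivAt (fun y : EuclideanSpace ℝ (Fin n) => ψ (s • y))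
      ((fderiv ℝ (fun y : EuclideanSpace ℝ (Fin n) => ψ y) (s • x)).comp (s • (ContinuousLinearMap.id ℝ (EuclideanSpace ℝ (Fin n))))) x := by
    intro s x
    have h1 : HasFDerivAt (fun y : EuclideanSpace ℝ (Fin n) => s • y) (s • ContinuousLinearMap.id ℝ (EuclideanSpace ℝ (Fin n))) x := by
      have := (s • ContinuousLinearMap.id ℝ (EuclideanSpace ℝ (Fin n))).hasFDerivAt (x := x)
      simpa [Pi.smul_def] using this
    exact ((hψc.differentiable (by simp) (s • x)).hasFDerivAt).comp x h1
  -- full derivative of the test function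
  have hDu : ∀ (t s : ℝ) (x : EuclideanSpace ℝ (Fin n)) (w : EuclideanSpace ℝ (Fin n)),
      fderiv ℝ (fun y : EuclideanSpace ℝ (Fin n) => Real.sin (t * y j) * ψ (s • y)) x w
        = Real.sin (t * x j) * (s * fderiv ℝ (fun y : EuclideanSpace ℝ (Fin n) => ψ y) (s • x) w)
          + ψ (s • x) * (Real.cos (t * x j) * (t * w j)) := by
    intro t s x w
    have h := (hsin t x).fun_mul (hχ s x)
    rw [h.fderiv]
    simp only [ContinuousLinearMap.add_apply, ContinuousLinearMap.coe_smul',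
      Pi.smul_apply, ContinuousLinearMap.coe_comp', Function.comp_apply,
      ContinuousLinearMap.coe_id', id_eq, smul_eq_mul, PiLp.proj_apply,
      _root_.map_smul]
    try ring
  -- smoothness and support of the test functions
  have huc : ∀ (t s : ℝ), ContDiff ℝ (⊤ : ℕ∞) (fun y : EuclideanSpace ℝ (Fin n) => Real.sin (t * y j) * ψ (s • y)) := by
    intro t s
    refine ContDiff.mul ?_ ?_
    · exact Real.contDiff_sin.comp (contDiff_const.mul (EuclideanSpace.proj j : EuclideanSpace ℝ (Fin n) →L[ℝ] ℝ).contDiff)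
    · exact hψc.comp (contDiff_const.fun_smul contDiff_id)
  have husupp : ∀ (t : ℝ) (s : ℝ), s ≠ 0 →
      HasCompactSupport (fun y : EuclideanSpace ℝ (Fin n) => Real.sin (t * y j) * ψ (s • y)) := by
    intro t s hs
    exact (hψsupp.comp_smul hs).mul_left
  -- continuity facts
  have hψcont : Continuous (fun y : EuclideanSpace ℝ (Fin n) => ψ y) := hψc.continuous
  have hDψcont : Continuous (fderiv ℝ (fun y : EuclideanSpace ℝ (Fin n) => ψ y)) := hψc.continuous_fderiv (by simp)
  -- Step B : ∀ t, ∫ aᵢ (cos(t xⱼ) * t) = 0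
  have hstepB : ∀ t : ℝ, ∫ x, a x i * (Real.cos (t * x j) * t) = 0 := by
    intro t
    -- left-hand side sequence
    set L : ℕ → ℝ := fun k => ∫ x, a x i *
      fderiv ℝ (fun y : EuclideanSpace ℝ (Fin n) => Real.sin (t * y j) * ψ (c k • y)) x vj with hL
    set R : ℕ → ℝ := fun k => ∫ x, a x j *
      fderiv ℝ (fun y : EuclideanSpace ℝ (Fin n) => Real.sin (t * y j) * ψ (c k • y)) x vi with hR
    have hLR : ∀ k, L k = R k := fun k =>
      hkey _ (huc t (c k)) (husupp t (c k) (hc0 k).ne')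
    have hvjj : (vj : EuclideanSpace ℝ (Fin n)) j = 1 := by rw [hvj]; simp [EuclideanSpace.single_apply]
    have hvij : (vi : EuclideanSpace ℝ (Fin n)) j = 0 := by
      rw [hvi]; simp [EuclideanSpace.single_apply, hj]
    have hnvj : ‖(vj : EuclideanSpace ℝ (Fin n))‖ = 1 := by rw [hvj]; simp [EuclideanSpace.norm_single]
    have hnvi : ‖(vi : EuclideanSpace ℝ (Fin n))‖ = 1 := by rw [hvi]; simp [EuclideanSpace.norm_single]
    -- L tends to ∫ aᵢ cos(t xⱼ) t
    have hLt : Tendsto L atTop (𝓝 (∫ x, a x i * (Real.cos (t * x j) * t))) := by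
      rw [hL]
      have hmeas : ∀ k : ℕ, AEStronglyMeasurable (fun x : EuclideanSpace ℝ (Fin n) => a x i *
          fderiv ℝ (fun y : EuclideanSpace ℝ (Fin n) => Real.sin (t * y j) * ψ (c k • y)) x vj) volume := by
        intro k
        exact ((hint i).aestronglyMeasurable.mul
          ((((huc t (c k)).continuous_fderiv (by simp)).clm_apply continuous_const).aestronglyMeasurable))
      have hbound : ∀ k : ℕ, ∀ᵐ x : EuclideanSpace ℝ (Fin n), ‖a x i *
          fderiv ℝ (fun y : EuclideanSpace ℝ (Fin n) => Real.sin (t * y j) * ψ (c k • y)) x vj‖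
            ≤ |a x i| * (Cψ + |t|) := by
        intro k
        filter_upwards with x
        rw [norm_mul, Real.norm_eq_abs, Real.norm_eq_abs]
        apply mul_le_mul_of_nonneg_left _ (abs_nonneg _)
        rw [hDu t (c k) x vj]
        refine le_trans (abs_add_le _ _) (add_le_add ?_ ?_)
        · rw [abs_mul]
          calc |Real.sin (t * x j)| * |c k * fderiv ℝ (fun y : EuclideanSpace ℝ (Fin n) => ψ y) (c k • x) vj|
              ≤ 1 * |c k * fderiv ℝ (fun y : EuclideanSpace ℝ (Fin n) => ψ y) (c k • x) vj| := by
                apply mul_le_mul_of_nonneg_right (Real.abs_sin_le_one _) (abs_nonneg _)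
            _ = |c k| * |fderiv ℝ (fun y : EuclideanSpace ℝ (Fin n) => ψ y) (c k • x) vj| := by
                rw [one_mul, abs_mul]
            _ ≤ 1 * (Cψ * ‖vj‖) := by
                apply mul_le_mul (by rw [abs_of_pos (hc0 k)]; exact hcle k)
                  (hDψ _ _) (abs_nonneg _) zero_le_one
            _ = Cψ := by rw [hnvj]; ring
        · rw [abs_mul, abs_mul, abs_mul, hvjj]
          calc |ψ (c k • x)| * (|Real.cos (t * x j)| * (|t| * |(1:ℝ)|))
              ≤ 1 * (1 * (|t| * 1)) := by
                apply mul_le_mul (by rw [abs_of_nonneg ψ.nonneg]; exact ψ.le_one)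
                  _ (by positivity) zero_le_one
                apply mul_le_mul (Real.abs_cos_le_one _) (by simp) (by positivity) zero_le_one
            _ = |t| := by ring
      have hbint : Integrable (fun x : EuclideanSpace ℝ (Fin n) => |a x i| * (Cψ + |t|)) volume :=
        (hint i).abs.mul_const _
      have hlim : ∀ᵐ x : EuclideanSpace ℝ (Fin n), Tendsto (fun k => a x i *
          fderiv ℝ (fun y : EuclideanSpace ℝ (Fin n) => Real.sin (t * y j) * ψ (c k • y)) x vj) atTop
          (𝓝 (a x i * (Real.cos (t * x j) * t))) := by
        filter_upwards with x
        apply Tendsto.const_mul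
        have h1 : Tendsto (fun k => Real.sin (t * x j) *
            (c k * fderiv ℝ (fun y : EuclideanSpace ℝ (Fin n) => ψ y) (c k • x) vj)) atTop (𝓝 0) := by
          apply squeeze_zero_norm (a := fun k => c k * Cψ)
          · intro k
            rw [norm_mul, Real.norm_eq_abs, Real.norm_eq_abs, abs_mul]
            calc |Real.sin (t * x j)| * (|c k| * |fderiv ℝ (fun y : EuclideanSpace ℝ (Fin n) => ψ y) (c k • x) vj|)
                ≤ 1 * (|c k| * (Cψ * ‖vj‖)) := by
                  apply mul_le_mul (Real.abs_sin_le_one _)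
                    (mul_le_mul_of_nonneg_left (hDψ _ _) (abs_nonneg _))
                    (by positivity) zero_le_one
              _ = c k * Cψ := by rw [hnvj, one_mul, abs_of_pos (hc0 k)]; ring
          · simpa [hc, one_div] using hct.mul_const Cψ
        have h2 : Tendsto (fun k => ψ (c k • x) * (Real.cos (t * x j) * (t * (vj : EuclideanSpace ℝ (Fin n)) j)))
            atTop (𝓝 (Real.cos (t * x j) * t)) := by
          have hev : ∀ᶠ k in atTop, ψ (c k • x) * (Real.cos (t * x j) * (t * (vj : EuclideanSpace ℝ (Fin n)) j))
              = Real.cos (t * x j) * t := by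
            have hxev : ∀ᶠ k : ℕ in atTop, ‖x‖ ≤ (k + 1 : ℝ) := by
              filter_upwards [eventually_ge_atTop ⌈‖x‖⌉₊] with k hk
              calc ‖x‖ ≤ (⌈‖x‖⌉₊ : ℝ) := Nat.le_ceil _
                _ ≤ (k : ℝ) := by exact_mod_cast hk
                _ ≤ (k + 1 : ℝ) := by linarith
            filter_upwards [hxev] with k hk
            have hmem : c k • x ∈ closedBall (0 : EuclideanSpace ℝ (Fin n)) ψ.rIn := by
              rw [mem_closedBall, dist_zero_right, norm_smul, Real.norm_eq_abs,
                abs_of_pos (hc0 k)]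
              have : c k * ‖x‖ ≤ 1 := by
                rw [hc]
                simp only
                rw [div_mul_eq_mul_div, one_mul, div_le_one (by positivity)]
                exact hk
              calc c k * ‖x‖ ≤ 1 := this
                _ = ψ.rIn := rfl
            rw [ψ.one_of_mem_closedBall hmem, hvjj]
            ring
          exact Tendsto.congr' (hev.mono fun k h => h.symm) tendsto_const_nhds
        have := h1.add h2
        rw [zero_add] at this
        refine Tendsto.congr (fun k => ?_) this
        rw [hDu t (c k) x vj, hvjj]
        try ring_nf
      have := tendsto_integral_of_dominated_convergence _ hmeas hbint hbound hlim
      exact this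
    -- R tends to 0
    have hRt : Tendsto R atTop (𝓝 0) := by
      rw [hR]
      have : (0 : ℝ) = ∫ x : EuclideanSpace ℝ (Fin n), (0 : ℝ) := by simp
      rw [this]
      have hmeas : ∀ k : ℕ, AEStronglyMeasurable (fun x : EuclideanSpace ℝ (Fin n) => a x j *
          fderiv ℝ (fun y : EuclideanSpace ℝ (Fin n) => Real.sin (t * y j) * ψ (c k • y)) x vi) volume := by
        intro k
        exact ((hint j).aestronglyMeasurable.mul
          ((((huc t (c k)).continuous_fderiv (by simp)).clm_apply continuous_const).aestronglyMeasurable))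
      have hbound : ∀ k : ℕ, ∀ᵐ x : EuclideanSpace ℝ (Fin n), ‖a x j *
          fderiv ℝ (fun y : EuclideanSpace ℝ (Fin n) => Real.sin (t * y j) * ψ (c k • y)) x vi‖
            ≤ |a x j| * Cψ := by
        intro k
        filter_upwards with x
        rw [norm_mul, Real.norm_eq_abs, Real.norm_eq_abs]
        apply mul_le_mul_of_nonneg_left _ (abs_nonneg _)
        rw [hDu t (c k) x vi, hvij]
        rw [show Real.sin (t * x j) * (c k * fderiv ℝ (fun y : EuclideanSpace ℝ (Fin n) => ψ y) (c k • x) vi)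
            + ψ (c k • x) * (Real.cos (t * x j) * (t * 0))
            = Real.sin (t * x j) * (c k * fderiv ℝ (fun y : EuclideanSpace ℝ (Fin n) => ψ y) (c k • x) vi) by ring]
        rw [abs_mul, abs_mul]
        calc |Real.sin (t * x j)| * (|c k| * |fderiv ℝ (fun y : EuclideanSpace ℝ (Fin n) => ψ y) (c k • x) vi|)
            ≤ 1 * (1 * (Cψ * ‖vi‖)) := by
              apply mul_le_mul (Real.abs_sin_le_one _)
              · apply mul_le_mul (by rw [abs_of_pos (hc0 k)]; exact hcle k) (hDψ _ _)
                  (abs_nonneg _) zero_le_one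
              · positivity
              · exact zero_le_one
          _ = Cψ := by rw [hnvi]; ring
      have hbint : Integrable (fun x : EuclideanSpace ℝ (Fin n) => |a x j| * Cψ) volume :=
        (hint j).abs.mul_const _
      have hlim : ∀ᵐ x : EuclideanSpace ℝ (Fin n), Tendsto (fun k => a x j *
          fderiv ℝ (fun y : EuclideanSpace ℝ (Fin n) => Real.sin (t * y j) * ψ (c k • y)) x vi) atTop
          (𝓝 (0 : ℝ)) := by
        filter_upwards with x
        apply squeeze_zero_norm (a := fun k => |a x j| * (c k * Cψ))
        · intro k
          rw [norm_mul, Real.norm_eq_abs, Real.norm_eq_abs]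
          apply mul_le_mul_of_nonneg_left _ (abs_nonneg _)
          rw [hDu t (c k) x vi, hvij]
          rw [show Real.sin (t * x j) * (c k * fderiv ℝ (fun y : EuclideanSpace ℝ (Fin n) => ψ y) (c k • x) vi)
              + ψ (c k • x) * (Real.cos (t * x j) * (t * 0))
              = Real.sin (t * x j) * (c k * fderiv ℝ (fun y : EuclideanSpace ℝ (Fin n) => ψ y) (c k • x) vi) by ring]
          rw [abs_mul, abs_mul]
          calc |Real.sin (t * x j)| * (|c k| * |fderiv ℝ (fun y : EuclideanSpace ℝ (Fin n) => ψ y) (c k • x) vi|)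
              ≤ 1 * (|c k| * (Cψ * ‖vi‖)) := by
                apply mul_le_mul (Real.abs_sin_le_one _)
                  (mul_le_mul_of_nonneg_left (hDψ _ _) (abs_nonneg _))
                  (by positivity) zero_le_one
            _ = c k * Cψ := by rw [hnvi, one_mul, abs_of_pos (hc0 k)]; ring
        · have : Tendsto (fun k => c k * Cψ) atTop (𝓝 0) := by simpa [hc, one_div] using hct.mul_const Cψ
          simpa using this.const_mul |a x j|
      have := tendsto_integral_of_dominated_convergence _ hmeas hbint hbound hlim
      simpa using this
    rw [show L = R from funext hLR] at hLt
    exact tendsto_nhds_unique hLt hRt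
  -- Step B': for t ≠ 0, ∫ aᵢ cos(t xⱼ) = 0
  have hstepB' : ∀ t : ℝ, t ≠ 0 → ∫ x, a x i * Real.cos (t * x j) = 0 := by
    intro t ht
    have h := hstepB t
    rw [show (fun x : EuclideanSpace ℝ (Fin n) => a x i * (Real.cos (t * x j) * t))
        = fun x : EuclideanSpace ℝ (Fin n) => (a x i * Real.cos (t * x j)) * t from funext fun x => by ring] at h
    rw [integral_mul_const] at h
    exact (mul_eq_zero.1 h).resolve_right ht
  -- Step C : let t → 0
  have hmeas : ∀ k : ℕ, AEStronglyMeasurable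
      (fun x : EuclideanSpace ℝ (Fin n) => a x i * Real.cos (c k * x j)) volume := fun k =>
    ((hint i).aestronglyMeasurable.mul
      ((Real.continuous_cos.comp ((continuous_const.mul
        ((EuclideanSpace.proj j : EuclideanSpace ℝ (Fin n) →L[ℝ] ℝ).continuous)))).aestronglyMeasurable))
  have hbound : ∀ k : ℕ, ∀ᵐ x : EuclideanSpace ℝ (Fin n), ‖a x i * Real.cos (c k * x j)‖ ≤ |a x i| := by
    intro k
    filter_upwards with x
    rw [norm_mul, Real.norm_eq_abs, Real.norm_eq_abs]
    calc |a x i| * |Real.cos (c k * x j)| ≤ |a x i| * 1 :=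
          mul_le_mul_of_nonneg_left (Real.abs_cos_le_one _) (abs_nonneg _)
      _ = |a x i| := mul_one _
  have hlim : ∀ᵐ x : EuclideanSpace ℝ (Fin n), Tendsto (fun k => a x i * Real.cos (c k * x j)) atTop
      (𝓝 (a x i)) := by
    filter_upwards with x
    have h1 : Tendsto (fun k => c k * x j) atTop (𝓝 0) := by
      simpa [hc, one_div] using hct.mul_const (x j)
    have h2 : Tendsto (fun k => Real.cos (c k * x j)) atTop (𝓝 1) := by
      have := (Real.continuous_cos.tendsto 0).comp h1
      simpa [Function.comp_def] using this
    have := h2.const_mul (a x i)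
    simpa using this
  have key := tendsto_integral_of_dominated_convergence _ hmeas (hint i).abs hbound hlim
  have hzero : (fun k => ∫ x : EuclideanSpace ℝ (Fin n), a x i * Real.cos (c k * x j)) = fun _ => (0 : ℝ) :=
    funext fun k => hstepB' (c k) (hc0 k).ne'
  rw [hzero] at key
  exact tendsto_nhds_unique key tendsto_const_nhds
end

section
/- Let n ≥ 2 and let F : ℝ^n → ℝ^n be a continuously differentiable vector field that is integrable on ℝ^n and divergence-free: Σ_{i=1}^n ∂F_i/∂x_i = 0 everywhere. Then ∫_{ℝ^n} F_i(x) dx = 0 for every i = 1, …, n. -/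
/-!
Since `div F = 0`, integrating `g · div F` by parts shows that `∫ Dg(x) (F x) = 0` for every
compactly supported `C¹` function `g`. Applying this to the rescalings `x ↦ R g(x / R)`, whose
derivative at `x` is `Dg(x / R)`, and letting `R → ∞` by dominated convergence gives
`Dg(0) (∫ F) = 0`. Every linear functional `ℓ` is `Dg(0)` for `g = ℓ · ψ` with `ψ` a bump
function equal to `1` near `0`, so `∫ F = 0`.
-/

open MeasureTheory Filter Topology

theorem hasFDerivAt_smul_comp_inv_smul {E F : Type*} [NormedAddCommGroup E] [NormedSpace ℝ E]
    [NormedAddCommGroup F] [NormedSpace ℝ F] {g : E → F} {g' : E →L[ℝ] F} {R : ℝ} (hR : R ≠ 0)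
    {x : E} (hg : HasFDerivAt g g' (R⁻¹ • x)) :
    HasFDerivAt (fun y => R • g (R⁻¹ • y)) g' x := by
  refine ((hg.comp x ((hasFDerivAt_id x).const_smul R⁻¹)).const_smul R).congr_fderiv ?_
  ext v
  simp [smul_smul, hR]

section Integral

variable {E : Type*} [NormedAddCommGroup E] [NormedSpace ℝ E] [MeasurableSpace E] [BorelSpace E]
  [FiniteDimensional ℝ E] {μ : Measure E}

theorem tendsto_integral_comp_inv_smul_apply {G H : Type*} [NormedAddCommGroup G]
    [NormedSpace ℝ G] [CompleteSpace G] [NormedAddCommGroup H] [NormedSpace ℝ H] [CompleteSpace H]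
    {φ : E → G →L[ℝ] H} (hφ : Continuous φ) {C : ℝ} (hC : ∀ y, ‖φ y‖ ≤ C)
    {f : E → G} (hf : Integrable f μ) :
    Tendsto (fun R : ℝ => ∫ x, φ (R⁻¹ • x) (f x) ∂μ) atTop (𝓝 (φ 0 (∫ x, f x ∂μ))) := by
  rw [← (φ 0).integral_comp_comm hf]
  refine tendsto_integral_filter_of_dominated_convergence (fun x => C * ‖f x‖)
    (.of_forall fun R => ?_) (.of_forall fun R => .of_forall fun x => ?_) (hf.norm.const_mul C)
    (.of_forall fun x => ?_)
  · exact (ContinuousLinearMap.id ℝ (G →L[ℝ] H)).aestronglyMeasurable_comp₂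
      (hφ.comp (continuous_const_smul R⁻¹)).aestronglyMeasurable hf.aestronglyMeasurable
  · exact (φ _).le_of_opNorm_le (hC _) _
  · have h0 : Tendsto (fun R : ℝ => R⁻¹ • x) atTop (𝓝 0) := by
      rw [← zero_smul ℝ x]
      exact tendsto_inv_atTop_zero.smul_const x
    exact ((hφ.clm_apply continuous_const).tendsto 0).comp h0

theorem integral_mul_fderiv_eq_neg_fderiv_mul_of_hasCompactSupport [μ.IsAddHaarMeasure]
    {f g : E → ℝ} (hf : ContDiff ℝ 1 f) (hg : ContDiff ℝ 1 g) (hgc : HasCompactSupport g)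
    (v : E) :
    ∫ x, g x * fderiv ℝ f x v ∂μ = -∫ x, fderiv ℝ g x v * f x ∂μ := by
  have hf' : Continuous fun x => fderiv ℝ f x v :=
    (hf.continuous_fderiv one_ne_zero).clm_apply continuous_const
  have hg' : Continuous fun x => fderiv ℝ g x v :=
    (hg.continuous_fderiv one_ne_zero).clm_apply continuous_const
  refine integral_mul_fderiv_eq_neg_fderiv_mul_of_integrable ?_ ?_ ?_
    (fun x _ => hg.differentiable one_ne_zero x) (fun x _ => hf.differentiable one_ne_zero x)
  · exact (hg'.mul hf.continuous).integrable_of_hasCompactSupport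
      (hgc.fderiv_apply (𝕜 := ℝ) v).mul_right
  · exact (hg.continuous.mul hf').integrable_of_hasCompactSupport hgc.mul_right
  · exact (hg.continuous.mul hf.continuous).integrable_of_hasCompactSupport hgc.mul_right

theorem integral_eq_zero_of_forall_integral_fderiv_apply_eq_zero
    {F : E → E} (hF : Integrable F μ)
    (h : ∀ g : E → ℝ, ContDiff ℝ 1 g → HasCompactSupport g → ∫ x, fderiv ℝ g x (F x) ∂μ = 0) :
    ∫ x, F x ∂μ = 0 := by
  refine SeparatingDual.eq_zero_of_forall_dual_eq_zero (R := ℝ) fun ℓ => ?_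
  let ψ : ContDiffBump (0 : E) := ⟨1, 2, one_pos, one_lt_two⟩
  set g : E → ℝ := fun y => ℓ y * ψ y
  have hg : ContDiff ℝ 1 g := ℓ.contDiff.mul ψ.contDiff
  have hgc : HasCompactSupport g := ψ.hasCompactSupport.mul_left
  have hg0 : fderiv ℝ g 0 = ℓ := by
    refine (ℓ.hasFDerivAt.mul (ψ.contDiff.differentiable one_ne_zero 0).hasFDerivAt).fderiv.trans ?_
    simp [ψ.one_of_mem_closedBall (Metric.mem_closedBall_self ψ.rIn_pos.le)]
  have hrescaled (R : ℝ) (hR : 0 < R) : ∫ x, fderiv ℝ g (R⁻¹ • x) (F x) ∂μ = 0 := by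
    have hderiv (x : E) :
        HasFDerivAt (fun y => R • g (R⁻¹ • y)) (fderiv ℝ g (R⁻¹ • x)) x :=
      hasFDerivAt_smul_comp_inv_smul hR.ne' (hg.differentiable one_ne_zero _).hasFDerivAt
    have hgR := h (fun y => R • g (R⁻¹ • y)) ((hg.comp (contDiff_const_smul _)).const_smul R)
      ((hgc.comp_smul (inv_ne_zero hR.ne')).smul_left (f := fun _ => R))
    simpa only [fun x => (hderiv x).fderiv] using hgR
  obtain ⟨C, hC⟩ := (hgc.fderiv ℝ).exists_bound_of_continuous (hg.continuous_fderiv one_ne_zero)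
  have hlim := tendsto_integral_comp_inv_smul_apply (hg.continuous_fderiv one_ne_zero) hC hF
  rw [hg0] at hlim
  exact tendsto_nhds_unique hlim
    (tendsto_const_nhds.congr' (eventually_gt_atTop 0 |>.mono fun R hR => (hrescaled R hR).symm))

end Integral

namespace EuclideanSpace

variable {n : ℕ}

theorem apply_eq_sum_apply_single_mul (L : EuclideanSpace ℝ (Fin n) →L[ℝ] ℝ)
    (v : EuclideanSpace ℝ (Fin n)) :
    L v = ∑ j, L (single j 1) * v j := by
  conv_lhs => rw [← (basisFun (Fin n) ℝ).sum_repr v]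
  simp [mul_comm]

theorem fderiv_component {F : EuclideanSpace ℝ (Fin n) → EuclideanSpace ℝ (Fin n)}
    {x : EuclideanSpace ℝ (Fin n)} (hF : DifferentiableAt ℝ F x) (v : EuclideanSpace ℝ (Fin n))
    (j : Fin n) :
    fderiv ℝ (fun y => F y j) x v = fderiv ℝ F x v j := by
  rw [show (fun y => F y j) = proj j ∘ F from rfl, fderiv_comp x (proj j).differentiableAt hF,
    ContinuousLinearMap.fderiv]
  rfl

theorem integral_fderiv_apply_eq_neg_integral_mul_divergence
    {μ : Measure (EuclideanSpace ℝ (Fin n))} [μ.IsAddHaarMeasure]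
    {F : EuclideanSpace ℝ (Fin n) → EuclideanSpace ℝ (Fin n)} {g : EuclideanSpace ℝ (Fin n) → ℝ}
    (hF : ContDiff ℝ 1 F) (hg : ContDiff ℝ 1 g) (hgc : HasCompactSupport g) :
    ∫ x, fderiv ℝ g x (F x) ∂μ = -∫ x, g x * ∑ j, fderiv ℝ F x (single j 1) j ∂μ := by
  have hFj (j : Fin n) : ContDiff ℝ 1 fun y => F y j := (proj (𝕜 := ℝ) j).contDiff.comp hF
  have hintegrable {f : EuclideanSpace ℝ (Fin n) → ℝ} (hf : Continuous f) :
      Integrable (fun x => g x * f x) μ :=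
    (hg.continuous.mul hf).integrable_of_hasCompactSupport hgc.mul_right
  calc ∫ x, fderiv ℝ g x (F x) ∂μ = ∑ j, ∫ x, fderiv ℝ g x (single j 1) * F x j ∂μ := by
        simp_rw [apply_eq_sum_apply_single_mul (fderiv ℝ g _) (F _)]
        refine integral_finsetSum _ fun j _ => ?_
        exact (((hg.continuous_fderiv one_ne_zero).clm_apply continuous_const).mul
          (hFj j).continuous).integrable_of_hasCompactSupport
          ((hgc.fderiv_apply (𝕜 := ℝ) _).mul_right)
    _ = ∑ j, -∫ x, g x * fderiv ℝ (fun y => F y j) x (single j 1) ∂μ := by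
        simp_rw [integral_mul_fderiv_eq_neg_fderiv_mul_of_hasCompactSupport (hFj _) hg hgc,
          neg_neg]
    _ = -∫ x, g x * ∑ j, fderiv ℝ (fun y => F y j) x (single j 1) ∂μ := by
        simp_rw [Finset.mul_sum]
        rw [integral_finsetSum _ fun j _ => hintegrable
          (((hFj j).continuous_fderiv one_ne_zero).clm_apply continuous_const),
          Finset.sum_neg_distrib]
    _ = -∫ x, g x * ∑ j, fderiv ℝ F x (single j 1) j ∂μ := by
        simp_rw [fderiv_component (hF.differentiable one_ne_zero _)]

end EuclideanSpace

theorem integral_components_eq_zero_of_div_free_general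
    (n : ℕ)
    (F : EuclideanSpace ℝ (Fin n) → EuclideanSpace ℝ (Fin n))
    (hF : ContDiff ℝ 1 F)
    (hFint : Integrable F volume)
    (hdiv : ∀ x : EuclideanSpace ℝ (Fin n),
      ∑ i : Fin n, fderiv ℝ F x (EuclideanSpace.single i 1) i = 0) :
    ∀ i : Fin n, ∫ x : EuclideanSpace ℝ (Fin n), F x i = 0 := by
  have hmean : ∫ x, F x = 0 :=
    integral_eq_zero_of_forall_integral_fderiv_apply_eq_zero hFint fun g hg hgc => by
      simp [EuclideanSpace.integral_fderiv_apply_eq_neg_integral_mul_divergence hF hg hgc, hdiv]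
  intro i
  calc ∫ x, F x i = EuclideanSpace.proj i (∫ x, F x) :=
        (EuclideanSpace.proj i).integral_comp_comm hFint
    _ = 0 := by rw [hmean, map_zero]

/-- If `F : ℝⁿ → ℝⁿ` is a continuously differentiable, integrable and
divergence-free vector field, then all the component averages `∫ Fᵢ` vanish. -/
theorem integral_components_eq_zero_of_div_free
    (n : ℕ) (hn : 2 ≤ n)
    (F : EuclideanSpace ℝ (Fin n) → EuclideanSpace ℝ (Fin n))
    (hF : ContDiff ℝ 1 F)
    (hFint : Integrable F volume)
    (hdiv : ∀ x : EuclideanSpace ℝ (Fin n),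
      ∑ i : Fin n, fderiv ℝ F x (EuclideanSpace.single i 1) i = 0) :
    ∀ i : Fin n, ∫ x : EuclideanSpace ℝ (Fin n), F x i = 0 :=
  integral_components_eq_zero_of_div_free_general n F hF hFint hdiv
end

section
/- Let n ≥ 2 and 1 ≤ k ≤ n, and set n' = n/(n−1). Let φ be a smooth differential (k−1)-form on ℝ^n (a smooth map from ℝ^n to alternating (k−1)-linear maps (ℝ^n)^{k−1} → ℝ) such that x ↦ ‖φ(x)‖ belongs to L^{n'}(ℝ^n). Define the k-form ω = dφ by ω(x)(v_1, …, v_k) = Σ_{i=1}^{k} (−1)^{i+1} (Dφ(x)(v_i))(v_1, …, v̂_i, …, v_k), and assume x ↦ ‖ω(x)‖ is integrable on ℝ^n. Then for all vectors v_1, …, v_k ∈ ℝ^n, ∫_{ℝ^n} ω(x)(v_1, …, v_k) dx = 0. -/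
open MeasureTheory

open scoped ENNReal in
open Metric Filter in
private lemma aux_divergence_vanish
    {E : Type*} [NormedAddCommGroup E] [NormedSpace ℝ E] [MeasurableSpace E]
    [BorelSpace E] [FiniteDimensional ℝ E]
    (μ : Measure E) [μ.IsAddHaarMeasure]
    (hn : 2 ≤ Module.finrank ℝ E)
    {N : ℕ} (g : Fin N → E → ℝ) (hg : ∀ i, ContDiff ℝ (⊤ : ℕ∞) (g i))
    (u : Fin N → E) (a : Fin N → ℝ) (G : E → ℝ)
    (hG : MemLp G (ENNReal.ofReal ((Module.finrank ℝ E : ℝ) /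
      ((Module.finrank ℝ E : ℝ) - 1))) μ)
    (hbound : ∀ i x, |g i x| ≤ G x)
    (hint : Integrable (fun x => ∑ i : Fin N, a i * fderiv ℝ (g i) x (u i)) μ) :
    ∫ x, ∑ i : Fin N, a i * fderiv ℝ (g i) x (u i) ∂μ = 0 := by
  classical
  set F : E → ℝ := fun x => ∑ i : Fin N, a i * fderiv ℝ (g i) x (u i) with hF
  set n : ℕ := Module.finrank ℝ E with hn'
  have hn1 : (1 : ℝ) < (n : ℝ) := by exact_mod_cast Nat.lt_of_lt_of_le one_lt_two hn
  have hnne : (n : ℝ) ≠ 0 := by positivity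
  set p' : ℝ := (n : ℝ) / ((n : ℝ) - 1) with hp'
  have hpq : p'.HolderConjugate (n : ℝ) := (Real.HolderConjugate.conjExponent hn1).symm
  have hp'pos : 0 < p' := hpq.pos
  -- the bump function and a bound on its derivative
  set ψ : ContDiffBump (0 : E) := ⟨1, 2, one_pos, one_lt_two⟩ with hψ
  have hψsm : ContDiff ℝ (⊤ : ℕ∞) (ψ : E → ℝ) := ψ.contDiff
  obtain ⟨M, hM⟩ : ∃ M, ∀ y, ‖fderiv ℝ (ψ : E → ℝ) y‖ ≤ M :=
    (hψsm.continuous_fderiv (by simp)).bounded_above_of_compact_support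
      (ψ.hasCompactSupport.fderiv (𝕜 := ℝ))
  have hM0 : 0 ≤ M := le_trans (norm_nonneg _) (hM 0)
  -- rescaled cutoffs
  set c : ℕ → ℝ := fun j => (j : ℝ) + 1 with hc'
  have hc : ∀ j, 0 < c j := fun j => by positivity
  set L : ℕ → E →L[ℝ] E := fun j => (c j)⁻¹ • ContinuousLinearMap.id ℝ E with hL
  have hLx : ∀ j x, L j x = (c j)⁻¹ • x := fun j x => rfl
  set χ : ℕ → E → ℝ := fun j x => ψ (L j x) with hχ
  have hχsm : ∀ j, ContDiff ℝ (⊤ : ℕ∞) (χ j) := fun j => hψsm.comp (L j).contDiff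
  have hχ1 : ∀ j x, ‖x‖ ≤ c j → χ j x = 1 := by
    intro j x hx
    apply ψ.one_of_mem_closedBall
    rw [mem_closedBall_zero_iff, hLx, norm_smul, norm_inv, Real.norm_eq_abs,
      abs_of_pos (hc j)]
    rw [inv_mul_le_iff₀ (hc j)]
    show ‖x‖ ≤ c j * 1
    rw [mul_one]; exact hx
  have hχ0 : ∀ j x, 2 * c j ≤ ‖x‖ → χ j x = 0 := by
    intro j x hx
    apply ψ.zero_of_le_dist
    rw [dist_zero_right, hLx, norm_smul, norm_inv, Real.norm_eq_abs, abs_of_pos (hc j)]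
    rw [le_inv_mul_iff₀ (hc j)]
    show c j * 2 ≤ ‖x‖
    linarith
  have hχsupp : ∀ j, HasCompactSupport (χ j) := by
    intro j
    apply HasCompactSupport.intro (isCompact_closedBall (0 : E) (2 * c j))
    intro x hx
    rw [mem_closedBall_zero_iff, not_le] at hx
    exact hχ0 j x hx.le
  have hχ01 : ∀ j x, 0 ≤ χ j x ∧ χ j x ≤ 1 := fun j x => ⟨ψ.nonneg, ψ.le_one⟩
  -- the derivative of the cutoff
  have hχD : ∀ j x, HasFDerivAt (χ j) ((fderiv ℝ (ψ : E → ℝ) (L j x)).comp (L j)) x := by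
    intro j x
    exact ((hψsm.differentiable (by simp) (L j x)).hasFDerivAt).comp x
      (L j).hasFDerivAt
  have hχDb : ∀ j x y, |fderiv ℝ (χ j) x y| ≤ M * (c j)⁻¹ * ‖y‖ := by
    intro j x y
    rw [(hχD j x).fderiv]
    calc |(fderiv ℝ (ψ : E → ℝ) (L j x)).comp (L j) y|
        = ‖fderiv ℝ (ψ : E → ℝ) (L j x) (L j y)‖ := by rw [Real.norm_eq_abs]; rfl
      _ ≤ ‖fderiv ℝ (ψ : E → ℝ) (L j x)‖ * ‖L j y‖ :=
          (fderiv ℝ (ψ : E → ℝ) (L j x)).le_opNorm _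
      _ ≤ M * ‖L j y‖ := by
          exact mul_le_mul_of_nonneg_right (hM _) (norm_nonneg _)
      _ = M * (c j)⁻¹ * ‖y‖ := by
          rw [hLx, norm_smul, norm_inv, Real.norm_eq_abs, abs_of_pos (hc j), mul_assoc]
  -- the annular region where the derivative of the cutoff lives
  set s : ℕ → Set E := fun j => closedBall (0 : E) (2 * c j) \ ball (0 : E) (c j) with hs
  have hs_meas : ∀ j, MeasurableSet (s j) := fun j =>
    measurableSet_closedBall.diff measurableSet_ball
  have hχDzero : ∀ j x, x ∉ s j → fderiv ℝ (χ j) x = 0 := by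
    intro j x hx
    rw [hs, Set.mem_diff, not_and_or, not_not] at hx
    rcases hx with hx | hx
    · have hev : χ j =ᶠ[nhds x] fun _ => (0 : ℝ) := by
        refine Filter.eventually_of_mem
          ((isOpen_compl_iff.2 (isClosed_closedBall)).mem_nhds hx) fun y hy => ?_
        rw [Set.mem_compl_iff, mem_closedBall_zero_iff, not_le] at hy
        exact hχ0 j y hy.le
      rw [hev.fderiv_eq, fderiv_fun_const]
      rfl
    · have hev : χ j =ᶠ[nhds x] fun _ => (1 : ℝ) := by
        refine Filter.eventually_of_mem (isOpen_ball.mem_nhds hx) fun y hy => ?_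
        rw [mem_ball_zero_iff] at hy
        exact hχ1 j y hy.le
      rw [hev.fderiv_eq, fderiv_fun_const]
      rfl
  -- the `ℝ≥0∞`-valued absolute value of `G`
  set q : E → ℝ≥0∞ := fun x => ENNReal.ofReal ‖G x‖ with hq
  have hGae : AEMeasurable G μ := hG.aestronglyMeasurable.aemeasurable
  have hq_meas : AEMeasurable q μ := ENNReal.measurable_ofReal.comp_aemeasurable hGae.norm
  have hqnn : ∀ x, q x = (‖G x‖₊ : ℝ≥0∞) := fun x => ofReal_norm (G x)
  have htot : ∫⁻ x, q x ^ p' ∂μ < ⊤ := by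
    have h0 : (ENNReal.ofReal p') ≠ 0 := by
      simp [ENNReal.ofReal_eq_zero, not_le, hp'pos]
    have h2 := lintegral_rpow_enorm_lt_top_of_eLpNorm_lt_top h0 ENNReal.ofReal_ne_top hG.2
    rw [ENNReal.toReal_ofReal hp'pos.le] at h2
    simp only [hqnn]
    exact h2
  -- the tail of the `L^{p'}` integral tends to `0`
  set tail : ℕ → ℝ≥0∞ := fun j => ∫⁻ x in (ball (0 : E) (c j))ᶜ, q x ^ p' ∂μ with htaildef
  have hcmono : ∀ ⦃j k : ℕ⦄, j ≤ k → c j ≤ c k := by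
    intro j k hjk
    simp only [hc']
    exact add_le_add_left (Nat.cast_le.2 hjk) 1
  have htail0 : Filter.Tendsto tail atTop (nhds 0) := by
    set ν : Measure E := μ.withDensity fun x => q x ^ p' with hν
    have hνs : ∀ j, tail j = ν ((ball (0 : E) (c j))ᶜ) := by
      intro j
      rw [hν, withDensity_apply _ measurableSet_ball.compl]
    have hmono : Antitone fun j : ℕ => (ball (0 : E) (c j))ᶜ := by
      intro j k hjk
      exact Set.compl_subset_compl.2 (ball_subset_ball (hcmono hjk))
    have hiI : (⋂ j : ℕ, (ball (0 : E) (c j))ᶜ) = ∅ := by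
      rw [Set.eq_empty_iff_forall_notMem]
      intro x hx
      obtain ⟨j, hj⟩ := exists_nat_gt ‖x‖
      have hmem := Set.mem_iInter.1 hx j
      rw [Set.mem_compl_iff, mem_ball_zero_iff] at hmem
      apply hmem
      calc ‖x‖ < (j : ℝ) := hj
        _ ≤ c j := by simp [hc']
    have hfin : ν Set.univ ≠ ⊤ := by
      rw [hν, withDensity_apply _ MeasurableSet.univ, Measure.restrict_univ]
      exact htot.ne
    have hT := tendsto_measure_iInter_atTop (μ := ν)
      (fun j : ℕ => measurableSet_ball.compl.nullMeasurableSet) hmono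
      ⟨0, ne_top_of_le_ne_top hfin (measure_mono (Set.subset_univ _))⟩
    rw [hiI, measure_empty] at hT
    have : tail = fun j => ν ((ball (0 : E) (c j))ᶜ) := funext hνs
    rw [this]
    exact hT
  -- Hölder's inequality on the annuli
  have hssub : ∀ j, s j ⊆ (ball (0 : E) (c j))ᶜ := fun j => by
    rw [hs]
    exact Set.diff_subset_compl _ _
  have hIj : ∀ j, ∫⁻ x in s j, q x ∂μ ≤ tail j ^ (1 / p') * μ (s j) ^ (1 / (n : ℝ)) := by
    intro j
    have hH := ENNReal.lintegral_mul_le_Lp_mul_Lq (μ.restrict (s j)) hpq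
      hq_meas.restrict (aemeasurable_const (b := (1 : ℝ≥0∞)))
    simp only [Pi.mul_apply, mul_one, ENNReal.one_rpow, lintegral_one,
      Measure.restrict_apply_univ] at hH
    refine le_trans hH (mul_le_mul_left ?_ _)
    apply ENNReal.rpow_le_rpow _ (by positivity)
    exact lintegral_mono_set (hssub j)
  have hfinrank : Module.finrank ℝ E = n := hn'.symm
  have hμs : ∀ j, μ (s j) ^ (1 / (n : ℝ)) ≤
      ENNReal.ofReal (2 * c j) * μ (ball (0 : E) 1) ^ (1 / (n : ℝ)) := by
    intro j
    have h1 : μ (s j) ≤ ENNReal.ofReal ((2 * c j) ^ n) * μ (ball (0 : E) 1) := by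
      rw [hn']
      rw [← Measure.addHaar_closedBall μ (0 : E) (by positivity : (0 : ℝ) ≤ 2 * c j)]
      exact measure_mono Set.diff_subset
    calc μ (s j) ^ (1 / (n : ℝ))
        ≤ (ENNReal.ofReal ((2 * c j) ^ n) * μ (ball (0 : E) 1)) ^ (1 / (n : ℝ)) :=
          ENNReal.rpow_le_rpow h1 (by positivity)
      _ = ENNReal.ofReal (2 * c j) * μ (ball (0 : E) 1) ^ (1 / (n : ℝ)) := by
          rw [ENNReal.mul_rpow_of_nonneg _ _ (by positivity),
            ENNReal.ofReal_pow (by positivity),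
            ← ENNReal.rpow_natCast (ENNReal.ofReal (2 * c j)) n,
            ← ENNReal.rpow_mul, mul_one_div, div_self hnne, ENNReal.rpow_one]
  have hcne0 : ∀ j, ENNReal.ofReal (c j) ≠ 0 := by
    intro j
    simp only [ne_eq, ENNReal.ofReal_eq_zero, not_le]
    exact hc j
  -- continuity and differentiability facts
  have hgd : ∀ i, Differentiable ℝ (g i) := fun i =>
    (hg i).differentiable (by simp)
  have hχd : ∀ j, Differentiable ℝ (χ j) := fun j =>
    (hχsm j).differentiable (by simp)
  have hgc : ∀ i, Continuous (g i) := fun i => (hg i).continuous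
  have hgDc : ∀ i, Continuous fun x => fderiv ℝ (g i) x (u i) := fun i =>
    ((hg i).continuous_fderiv (by simp)).clm_apply continuous_const
  have hχc : ∀ j, Continuous (χ j) := fun j => (hχsm j).continuous
  have hFc : Continuous F := by
    rw [hF]
    refine continuous_finset_sum _ fun i _ => continuous_const.mul ?_
    exact ((hg i).continuous_fderiv (by simp)).clm_apply continuous_const
  -- integrability of the various products
  have hint1 : ∀ j i, Integrable (fun x => fderiv ℝ (χ j) x (u i) * g i x) μ := by
    intro j i
    apply Continuous.integrable_of_hasCompactSupport
    · exact (((hχsm j).continuous_fderiv (by simp)).clm_apply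
        continuous_const).mul (hgc i)
    · exact (((hχsupp j).fderiv (𝕜 := ℝ)).comp_left
        (g := fun l : E →L[ℝ] ℝ => l (u i)) rfl).mul_right
  have hint2 : ∀ j i, Integrable (fun x => χ j x * fderiv ℝ (g i) x (u i)) μ := by
    intro j i
    apply Continuous.integrable_of_hasCompactSupport
    · exact (hχc j).mul (hgDc i)
    · exact (hχsupp j).mul_right
  have hint3 : ∀ j i, Integrable (fun x => χ j x * g i x) μ := fun j i =>
    Continuous.integrable_of_hasCompactSupport ((hχc j).mul (hgc i)) (hχsupp j).mul_right
  -- integration by parts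
  have hIBP : ∀ j i, ∫ x, χ j x * fderiv ℝ (g i) x (u i) ∂μ
      = - ∫ x, fderiv ℝ (χ j) x (u i) * g i x ∂μ := fun j i =>
    integral_mul_fderiv_eq_neg_fderiv_mul_of_integrable (hint1 j i) (hint2 j i) (hint3 j i)
      (fun x _ => hχd j x) (fun x _ => hgd i x)
  -- splitting the truncated integral
  have hsplit : ∀ j, ∫ x, χ j x * F x ∂μ
      = ∑ i : Fin N, a i * ∫ x, χ j x * fderiv ℝ (g i) x (u i) ∂μ := by
    intro j
    have h1 : ∀ x, χ j x * F x = ∑ i : Fin N, a i * (χ j x * fderiv ℝ (g i) x (u i)) := by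
      intro x
      rw [hF, Finset.mul_sum]
      exact Finset.sum_congr rfl fun i _ => by ring
    calc ∫ x, χ j x * F x ∂μ
        = ∫ x, ∑ i : Fin N, a i * (χ j x * fderiv ℝ (g i) x (u i)) ∂μ :=
          integral_congr_ae (Filter.Eventually.of_forall h1)
      _ = ∑ i : Fin N, ∫ x, a i * (χ j x * fderiv ℝ (g i) x (u i)) ∂μ :=
          integral_finset_sum _ fun i _ => (hint2 j i).const_mul _
      _ = ∑ i : Fin N, a i * ∫ x, χ j x * fderiv ℝ (g i) x (u i) ∂μ :=
          Finset.sum_congr rfl fun i _ => integral_const_mul _ _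
  -- bounding the boundary terms
  have hLbound : ∀ j i, ENNReal.ofReal |∫ x, fderiv ℝ (χ j) x (u i) * g i x ∂μ|
      ≤ ENNReal.ofReal (M * ‖u i‖) * ((ENNReal.ofReal (c j))⁻¹ * ∫⁻ x in s j, q x ∂μ) := by
    intro j i
    have h1 : |∫ x, fderiv ℝ (χ j) x (u i) * g i x ∂μ|
        ≤ (∫⁻ x, ENNReal.ofReal ‖fderiv ℝ (χ j) x (u i) * g i x‖ ∂μ).toReal := by
      rw [← Real.norm_eq_abs]
      exact norm_integral_le_lintegral_norm _
    refine le_trans (le_trans (ENNReal.ofReal_le_ofReal h1) ENNReal.ofReal_toReal_le) ?_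
    have h2 : ∀ x, ENNReal.ofReal ‖fderiv ℝ (χ j) x (u i) * g i x‖
        ≤ (ENNReal.ofReal (M * ‖u i‖) * (ENNReal.ofReal (c j))⁻¹) * (s j).indicator q x := by
      intro x
      by_cases hx : x ∈ s j
      · rw [Set.indicator_of_mem hx]
        have h3 : ‖fderiv ℝ (χ j) x (u i) * g i x‖ ≤ M * ‖u i‖ * (c j)⁻¹ * ‖G x‖ := by
          rw [Real.norm_eq_abs, abs_mul]
          have b1 : |fderiv ℝ (χ j) x (u i)| ≤ M * (c j)⁻¹ * ‖u i‖ := hχDb j x (u i)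
          have b2 : |g i x| ≤ ‖G x‖ := by
            rw [Real.norm_eq_abs]
            exact le_trans (hbound i x) (le_abs_self _)
          calc |fderiv ℝ (χ j) x (u i)| * |g i x| ≤ M * (c j)⁻¹ * ‖u i‖ * ‖G x‖ :=
              mul_le_mul b1 b2 (abs_nonneg _) (by positivity)
            _ = M * ‖u i‖ * (c j)⁻¹ * ‖G x‖ := by ring
        calc ENNReal.ofReal ‖fderiv ℝ (χ j) x (u i) * g i x‖
            ≤ ENNReal.ofReal (M * ‖u i‖ * (c j)⁻¹ * ‖G x‖) := ENNReal.ofReal_le_ofReal h3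
          _ = ENNReal.ofReal (M * ‖u i‖) * (ENNReal.ofReal (c j))⁻¹ * q x := by
              rw [ENNReal.ofReal_mul (by positivity), ENNReal.ofReal_mul (by positivity),
                ENNReal.ofReal_inv_of_pos (hc j)]
      · rw [Set.indicator_of_notMem hx, mul_zero, hχDzero j x hx]
        simp
    refine le_trans (lintegral_mono h2) ?_
    rw [lintegral_const_mul' _ _
      (ENNReal.mul_ne_top ENNReal.ofReal_ne_top (ENNReal.inv_ne_top.2 (hcne0 j))),
      lintegral_indicator (hs_meas j) _, mul_assoc]
  -- the vanishing upper bound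
  set B : ℝ≥0∞ := ENNReal.ofReal 2 * μ (ball (0 : E) 1) ^ (1 / (n : ℝ)) with hB
  have hBne : B ≠ ⊤ := by
    apply ENNReal.mul_ne_top ENNReal.ofReal_ne_top
    exact ENNReal.rpow_ne_top_of_nonneg (by positivity) measure_ball_lt_top.ne
  set R : ℕ → ℝ≥0∞ := fun j => tail j ^ (1 / p') * B with hR
  have hDR : ∀ j, (ENNReal.ofReal (c j))⁻¹ * ∫⁻ x in s j, q x ∂μ ≤ R j := by
    intro j
    calc (ENNReal.ofReal (c j))⁻¹ * ∫⁻ x in s j, q x ∂μ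
        ≤ (ENNReal.ofReal (c j))⁻¹ * (tail j ^ (1 / p') *
          (ENNReal.ofReal (2 * c j) * μ (ball (0 : E) 1) ^ (1 / (n : ℝ)))) :=
          mul_le_mul_right (le_trans (hIj j) (mul_le_mul_right (hμs j) _)) _
      _ = (ENNReal.ofReal (c j))⁻¹ * ENNReal.ofReal (c j) * (tail j ^ (1 / p') * B) := by
          rw [hB, show (2 : ℝ) * c j = c j * 2 from mul_comm _ _,
            ENNReal.ofReal_mul (hc j).le]
          ring
      _ = R j := by
          rw [ENNReal.inv_mul_cancel (hcne0 j) ENNReal.ofReal_ne_top, one_mul, hR]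
  have hR0 : Filter.Tendsto R atTop (nhds 0) := by
    have h1 : Filter.Tendsto (fun j => tail j ^ (1 / p')) atTop (nhds 0) := by
      have h2 := ((ENNReal.continuous_rpow_const (y := 1 / p')).tendsto 0).comp htail0
      rwa [ENNReal.zero_rpow_of_pos (by positivity)] at h2
    have h3 := ENNReal.Tendsto.mul_const h1 (Or.inr hBne)
    rwa [zero_mul] at h3
  -- the truncated integrals
  set A : ℕ → ℝ := fun j => ∫ x, χ j x * F x ∂μ with hA
  set CC : ℝ≥0∞ := ∑ i : Fin N, ENNReal.ofReal (|a i| * (M * ‖u i‖)) with hCC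
  have hCCne : CC ≠ ⊤ := by
    rw [hCC]
    exact (ENNReal.sum_lt_top.2 fun i _ => ENNReal.ofReal_lt_top).ne
  have hAbound : ∀ j, ENNReal.ofReal |A j| ≤ CC * R j := by
    intro j
    have habs : |A j| ≤ ∑ i : Fin N, |a i| * |∫ x, fderiv ℝ (χ j) x (u i) * g i x ∂μ| := by
      rw [hA]
      simp only []
      rw [hsplit j]
      refine le_trans (Finset.abs_sum_le_sum_abs _ _) ?_
      refine Finset.sum_le_sum fun i _ => ?_
      rw [abs_mul, hIBP j i, abs_neg]
    calc ENNReal.ofReal |A j|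
        ≤ ENNReal.ofReal (∑ i : Fin N, |a i| *
          |∫ x, fderiv ℝ (χ j) x (u i) * g i x ∂μ|) := ENNReal.ofReal_le_ofReal habs
      _ = ∑ i : Fin N, ENNReal.ofReal (|a i| *
          |∫ x, fderiv ℝ (χ j) x (u i) * g i x ∂μ|) :=
          ENNReal.ofReal_sum_of_nonneg fun i _ => by positivity
      _ ≤ ∑ i : Fin N, ENNReal.ofReal (|a i| * (M * ‖u i‖)) * R j := by
          refine Finset.sum_le_sum fun i _ => ?_
          calc ENNReal.ofReal (|a i| * |∫ x, fderiv ℝ (χ j) x (u i) * g i x ∂μ|)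
              = ENNReal.ofReal |a i| *
                ENNReal.ofReal |∫ x, fderiv ℝ (χ j) x (u i) * g i x ∂μ| :=
              ENNReal.ofReal_mul (abs_nonneg _)
            _ ≤ ENNReal.ofReal |a i| * (ENNReal.ofReal (M * ‖u i‖) * R j) :=
              mul_le_mul_right (le_trans (hLbound j i) (mul_le_mul_right (hDR j) _)) _
            _ = ENNReal.ofReal (|a i| * (M * ‖u i‖)) * R j := by
              rw [ENNReal.ofReal_mul (abs_nonneg _), mul_assoc]
      _ = CC * R j := by rw [hCC, Finset.sum_mul]
  have hAtend0 : Filter.Tendsto (fun j => ENNReal.ofReal |A j|) atTop (nhds 0) := by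
    have hCR : Filter.Tendsto (fun j => CC * R j) atTop (nhds 0) := by
      have h4 := ENNReal.Tendsto.const_mul hR0 (Or.inr hCCne)
      rwa [mul_zero] at h4
    exact tendsto_of_tendsto_of_tendsto_of_le_of_le tendsto_const_nhds hCR
      (fun j => zero_le) hAbound
  have hAabs : Filter.Tendsto (fun j => |A j|) atTop (nhds 0) := by
    have h1 := (ENNReal.tendsto_toReal (a := (0 : ℝ≥0∞)) (by simp)).comp hAtend0
    rw [ENNReal.toReal_zero] at h1
    exact h1.congr fun j => ENNReal.toReal_ofReal (abs_nonneg _)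
  have hAten : Filter.Tendsto A atTop (nhds 0) := by
    rw [tendsto_zero_iff_norm_tendsto_zero]
    simpa [Real.norm_eq_abs] using hAabs
  -- dominated convergence
  have hA2 : Filter.Tendsto A atTop (nhds (∫ x, F x ∂μ)) := by
    rw [hA]
    apply tendsto_integral_of_dominated_convergence (bound := fun x => |F x|)
    · intro j
      exact ((hχc j).mul hFc).aestronglyMeasurable
    · exact hint.abs
    · intro j
      filter_upwards with x
      rw [Real.norm_eq_abs, abs_mul]
      calc |χ j x| * |F x| ≤ 1 * |F x| := by
            refine mul_le_mul_of_nonneg_right ?_ (abs_nonneg _)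
            rw [abs_of_nonneg (hχ01 j x).1]
            exact (hχ01 j x).2
        _ = |F x| := one_mul _
    · filter_upwards with x
      apply Filter.Tendsto.congr' _ tendsto_const_nhds
      filter_upwards [Filter.eventually_ge_atTop ⌈‖x‖⌉₊] with j hj
      have hxc : ‖x‖ ≤ c j := by
        calc ‖x‖ ≤ (⌈‖x‖⌉₊ : ℝ) := Nat.le_ceil _
          _ ≤ (j : ℝ) := by exact_mod_cast hj
          _ ≤ c j := by simp only [hc']; linarith
      rw [hχ1 j x hxc, one_mul]
  exact tendsto_nhds_unique hA2 hAten

/-- Averages of exact `L¹` forms with primitive in `L^{n'}`, `n' = n/(n-1)`,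
vanish on `ℝⁿ`. Here the degree is `k = k' + 1` with `1 ≤ k ≤ n`; `φ` is a
smooth `(k-1)`-form (an alternating `k'`-multilinear-map-valued map) whose
pointwise norm is in `L^{n'}`, and `ω = dφ` is assumed integrable. -/
theorem integral_exact_form_eq_zero_of_primitive_memLp
    (n k' : ℕ) (hn : 2 ≤ n) (hk : k' + 1 ≤ n)
    (φ : EuclideanSpace ℝ (Fin n) →
      (EuclideanSpace ℝ (Fin n) [×k']→L[ℝ] ℝ))
    (hφsmooth : ContDiff ℝ (⊤ : ℕ∞) φ)
    (hφalt : ∀ (x : EuclideanSpace ℝ (Fin n))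
      (v : Fin k' → EuclideanSpace ℝ (Fin n)) (i j : Fin k'),
      i ≠ j → v i = v j → φ x v = 0)
    (hφLp : MemLp (fun x => ‖φ x‖)
      (ENNReal.ofReal ((n : ℝ) / ((n : ℝ) - 1))) volume)
    (ω : EuclideanSpace ℝ (Fin n) →
      (EuclideanSpace ℝ (Fin n) [×(k' + 1)]→L[ℝ] ℝ))
    (hω : ∀ (x : EuclideanSpace ℝ (Fin n))
      (v : Fin (k' + 1) → EuclideanSpace ℝ (Fin n)),
      ω x v = ∑ i : Fin (k' + 1), (-1 : ℝ) ^ (i : ℕ) *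
        (fderiv ℝ φ x (v i)) (fun j : Fin k' => v (i.succAbove j)))
    (hωint : Integrable (fun x => ‖ω x‖) volume) :
    ∀ v : Fin (k' + 1) → EuclideanSpace ℝ (Fin n),
      ∫ x : EuclideanSpace ℝ (Fin n), ω x v = 0 := by
  intro v
  -- the `(k-1)`-vector arguments of the `i`-th term
  set w : Fin (k' + 1) → (Fin k' → EuclideanSpace ℝ (Fin n)) :=
    fun i j => v (i.succAbove j) with hw
  -- the scalar component functions
  set g : Fin (k' + 1) → EuclideanSpace ℝ (Fin n) → ℝ := fun i x => φ x (w i) with hg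
  have hφdiff : Differentiable ℝ φ := hφsmooth.differentiable (by simp)
  have hgsmooth : ∀ i, ContDiff ℝ (⊤ : ℕ∞) (g i) := by
    intro i
    exact (ContinuousMultilinearMap.apply ℝ
      (fun _ : Fin k' => EuclideanSpace ℝ (Fin n)) ℝ (w i)).contDiff.comp
      (hφsmooth.of_le (by simp))
  -- pointwise identification of `ω x v` with the "divergence" expression
  have hpt : ∀ x, ω x v = ∑ i : Fin (k' + 1), (-1 : ℝ) ^ (i : ℕ) * fderiv ℝ (g i) x (v i) := by
    intro x
    rw [hω x v]
    refine Finset.sum_congr rfl fun i _ => ?_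
    rw [fderiv_continuousMultilinear_apply_const_apply (hφdiff x) (w i) (v i)]
  -- the constant bounding all component functions
  set C : ℝ := ∑ i : Fin (k' + 1), ∏ j, ‖w i j‖ with hC
  have hbound : ∀ i x, |g i x| ≤ C * ‖φ x‖ := by
    intro i x
    have h1 : |g i x| ≤ ‖φ x‖ * ∏ j, ‖w i j‖ := (φ x).le_opNorm (w i)
    have h2 : (∏ j, ‖w i j‖) ≤ C := by
      refine Finset.single_le_sum (f := fun i => ∏ j, ‖w i j‖) (fun i _ => ?_) (Finset.mem_univ i)
      positivity
    calc |g i x| ≤ ‖φ x‖ * ∏ j, ‖w i j‖ := h1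
      _ ≤ ‖φ x‖ * C := mul_le_mul_of_nonneg_left h2 (norm_nonneg _)
      _ = C * ‖φ x‖ := mul_comm _ _
  have hGLp : MemLp (fun x => C * ‖φ x‖) (ENNReal.ofReal ((n : ℝ) / ((n : ℝ) - 1))) volume :=
    hφLp.const_mul C
  have hFint : Integrable
      (fun x => ∑ i : Fin (k' + 1), (-1 : ℝ) ^ (i : ℕ) * fderiv ℝ (g i) x (v i)) volume := by
    have hcont : Continuous
        fun x => ∑ i : Fin (k' + 1), (-1 : ℝ) ^ (i : ℕ) * fderiv ℝ (g i) x (v i) := by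
      refine continuous_finset_sum _ fun i _ => ?_
      exact continuous_const.mul
        (((hgsmooth i).continuous_fderiv (by simp)).clm_apply continuous_const)
    refine (hωint.mul_const (∏ i, ‖v i‖)).mono' hcont.aestronglyMeasurable ?_
    filter_upwards with x
    rw [← hpt x]
    simpa using (ω x).le_opNorm v
  have hfr : 2 ≤ Module.finrank ℝ (EuclideanSpace ℝ (Fin n)) := by
    rw [finrank_euclideanSpace_fin]; exact hn
  have := aux_divergence_vanish (volume : Measure (EuclideanSpace ℝ (Fin n))) hfr g hgsmooth v
    (fun i => (-1 : ℝ) ^ (i : ℕ)) (fun x => C * ‖φ x‖)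
    (by rwa [finrank_euclideanSpace_fin]) hbound hFint
  calc ∫ x : EuclideanSpace ℝ (Fin n), ω x v
      = ∫ x : EuclideanSpace ℝ (Fin n),
        ∑ i : Fin (k' + 1), (-1 : ℝ) ^ (i : ℕ) * fderiv ℝ (g i) x (v i) :=
        integral_congr_ae (Filter.Eventually.of_forall hpt)
    _ = 0 := this
end

section
/- Let n ≥ 2 and set n' = n/(n−1). Let N ≥ 1, let φ_1, …, φ_N : ℝ^n → ℝ be continuously differentiable functions each belonging to L^{n'}(ℝ^n), let i_1, …, i_N ∈ {1, …, n} be indices, and let c_1, …, c_N be real numbers. If the function a := Σ_{j=1}^{N} c_j · ∂φ_j/∂x_{i_j} is integrable on ℝ^n, then ∫_{ℝ^n} a(x) dx = 0. -/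
/-!
Multiply `a` by the cut-offs `ξₖ(x) = ψ(2 - log (1 + ‖x‖²) / k)`, where `ψ` is a smooth
transition from `0` to `1`. Dominated convergence gives `∫ a ξₖ → ∫ a`, while integration by
parts and Hölder's inequality give `|∫ a ξₖ| ≤ Σⱼ |cⱼ| ‖φⱼ‖_{n'} ‖∇ξₖ‖_n`. The gradient of `ξₖ`
is `O(1 / (k ‖x‖))` on the annulus `1 ≤ ‖x‖ ≤ eᵏ` and vanishes elsewhere; since `‖x‖⁻ⁿ` is
only logarithmically divergent, `‖∇ξₖ‖_nⁿ = O(k⁻ⁿ · k)`, which tends to `0` as `n > 1`.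
-/

open MeasureTheory Filter Topology Set Metric Module
open scoped ENNReal

section ParabolicCutoff

variable {E : Type*} [NormedAddCommGroup E] [NormedSpace ℝ E] [MeasurableSpace E]

/-- Cut-offs witnessing that `(E, μ)` is `q`-parabolic, i.e. that its `q`-capacity at infinity
vanishes. -/
structure IsParabolicCutoffSeq (q : ℝ≥0∞) (μ : Measure E) (ξ : ℕ → E → ℝ) : Prop where
  contDiff : ∀ k, ContDiff ℝ 1 (ξ k)
  hasCompactSupport : ∀ k, HasCompactSupport (ξ k)
  norm_le_one : ∀ k x, ‖ξ k x‖ ≤ 1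
  tendsto_one : ∀ x, Tendsto (ξ · x) atTop (𝓝 1)
  tendsto_eLpNorm_fderiv : Tendsto (fun k ↦ eLpNorm (fderiv ℝ (ξ k)) q μ) atTop (𝓝 0)

section IntegrationByParts

variable [BorelSpace E] [FiniteDimensional ℝ E] {μ : Measure E} [μ.IsAddHaarMeasure]

theorem integral_fderiv_mul_eq_neg_integral_mul_fderiv_of_hasCompactSupport {f g : E → ℝ}
    (hf : ContDiff ℝ 1 f) (hg : ContDiff ℝ 1 g) (hg_supp : HasCompactSupport g) (v : E) :
    ∫ x, fderiv ℝ f x v * g x ∂μ = -∫ x, f x * fderiv ℝ g x v ∂μ := by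
  have hf' : Continuous fun x ↦ fderiv ℝ f x v :=
    (hf.continuous_fderiv one_ne_zero).clm_apply continuous_const
  have hg' : Continuous fun x ↦ fderiv ℝ g x v :=
    (hg.continuous_fderiv one_ne_zero).clm_apply continuous_const
  rw [integral_mul_fderiv_eq_neg_fderiv_mul_of_integrable, neg_neg]
  · exact (hf'.mul hg.continuous).integrable_of_hasCompactSupport hg_supp.mul_left
  · exact (hf.continuous.mul hg').integrable_of_hasCompactSupport
      (hg_supp.fderiv_apply ℝ v).mul_left
  · exact (hf.continuous.mul hg.continuous).integrable_of_hasCompactSupport hg_supp.mul_left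
  · exact fun x _ ↦ hf.differentiable one_ne_zero x
  · exact fun x _ ↦ hg.differentiable one_ne_zero x

end IntegrationByParts

namespace IsParabolicCutoffSeq

variable [BorelSpace E] {q : ℝ≥0∞} {μ : Measure E} {ξ : ℕ → E → ℝ}

theorem tendsto_integral_mul (hξ : IsParabolicCutoffSeq q μ ξ) {a : E → ℝ}
    (ha : Integrable a μ) :
    Tendsto (fun k ↦ ∫ x, a x * ξ k x ∂μ) atTop (𝓝 (∫ x, a x ∂μ)) := by
  refine tendsto_integral_of_dominated_convergence (‖a ·‖)
    (fun k ↦ ha.1.mul (hξ.contDiff k).continuous.aestronglyMeasurable) ha.norm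
    (fun k ↦ ae_of_all _ fun x ↦ ?_) (ae_of_all _ fun x ↦ ?_)
  · rw [norm_mul]
    exact mul_le_of_le_one_right (norm_nonneg _) (hξ.norm_le_one k x)
  · simpa using (hξ.tendsto_one x).const_mul (a x)

variable [FiniteDimensional ℝ E]

theorem tendsto_integral_mul_fderiv (hξ : IsParabolicCutoffSeq q μ ξ) {p : ℝ≥0∞}
    [p.HolderConjugate q] {φ : E → ℝ} (hφ : MemLp φ p μ) (v : E) :
    Tendsto (fun k ↦ ∫ x, φ x * fderiv ℝ (ξ k) x v ∂μ) atTop (𝓝 0) := by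
  have holder : ∀ k, ‖∫ x, φ x * fderiv ℝ (ξ k) x v ∂μ‖ₑ ≤
      ‖v‖₊ * eLpNorm φ p μ * eLpNorm (fderiv ℝ (ξ k)) q μ := fun k ↦
    (enorm_integral_le_lintegral_enorm _).trans <| eLpNorm_one_eq_lintegral_enorm.symm.trans_le <|
      eLpNorm_le_eLpNorm_mul_eLpNorm'_of_norm hφ.1
        ((hξ.contDiff k).continuous_fderiv one_ne_zero).aestronglyMeasurable
        (fun a L ↦ a * L v) ‖v‖₊ (ae_of_all _ fun x ↦ by
          simpa [norm_mul, mul_comm, mul_left_comm, mul_assoc] using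
            mul_le_mul_of_nonneg_left ((fderiv ℝ (ξ k) x).le_opNorm v) (norm_nonneg (φ x)))
  have hbound : Tendsto (fun k ↦ ‖v‖₊ * eLpNorm φ p μ * eLpNorm (fderiv ℝ (ξ k)) q μ)
      atTop (𝓝 0) := by
    simpa using ENNReal.Tendsto.const_mul hξ.tendsto_eLpNorm_fderiv
      (Or.inr (ENNReal.mul_ne_top ENNReal.coe_ne_top hφ.eLpNorm_ne_top))
  exact tendsto_zero_iff_enorm_tendsto_zero.2 <|
    tendsto_of_tendsto_of_tendsto_of_le_of_le tendsto_const_nhds hbound (fun _ ↦ zero_le) holder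

variable [μ.IsAddHaarMeasure]

theorem tendsto_integral_fderiv_mul (hξ : IsParabolicCutoffSeq q μ ξ) {p : ℝ≥0∞}
    [p.HolderConjugate q] {φ : E → ℝ} (hφ : ContDiff ℝ 1 φ) (hφp : MemLp φ p μ) (v : E) :
    Tendsto (fun k ↦ ∫ x, fderiv ℝ φ x v * ξ k x ∂μ) atTop (𝓝 0) := by
  simp_rw [integral_fderiv_mul_eq_neg_integral_mul_fderiv_of_hasCompactSupport hφ
    (hξ.contDiff _) (hξ.hasCompactSupport _)]
  simpa using (hξ.tendsto_integral_mul_fderiv hφp v).neg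

theorem integral_sum_fderiv_eq_zero (hξ : IsParabolicCutoffSeq q μ ξ) {p : ℝ≥0∞}
    [p.HolderConjugate q] {ι : Type*} (s : Finset ι) {φ : ι → E → ℝ}
    (hφ : ∀ j, ContDiff ℝ 1 (φ j)) (hφp : ∀ j, MemLp (φ j) p μ) (v : ι → E) (c : ι → ℝ)
    (hint : Integrable (fun x ↦ ∑ j ∈ s, c j * fderiv ℝ (φ j) x (v j)) μ) :
    ∫ x, ∑ j ∈ s, c j * fderiv ℝ (φ j) x (v j) ∂μ = 0 := by
  refine tendsto_nhds_unique (hξ.tendsto_integral_mul hint) ?_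
  have hterm : ∀ k j, Integrable (fun x ↦ fderiv ℝ (φ j) x (v j) * ξ k x) μ := fun k j ↦
    ((((hφ j).continuous_fderiv one_ne_zero).clm_apply continuous_const).mul
      (hξ.contDiff k).continuous).integrable_of_hasCompactSupport (hξ.hasCompactSupport k).mul_left
  have hsplit : ∀ k, ∫ x, (∑ j ∈ s, c j * fderiv ℝ (φ j) x (v j)) * ξ k x ∂μ =
      ∑ j ∈ s, c j * ∫ x, fderiv ℝ (φ j) x (v j) * ξ k x ∂μ := fun k ↦ by
    simp_rw [Finset.sum_mul, mul_assoc, ← integral_const_mul]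
    exact integral_finsetSum _ fun j _ ↦ (hterm k j).const_mul _
  simp_rw [hsplit]
  simpa using tendsto_finsetSum s fun j _ ↦
    (hξ.tendsto_integral_fderiv_mul (hφ j) (hφp j) (v j)).const_mul (c j)

end IsParabolicCutoffSeq

end ParabolicCutoff

namespace Real.smoothTransition

theorem deriv_eq_zero_of_notMem_Icc {t : ℝ} (ht : t ∉ Icc 0 1) :
    deriv smoothTransition t = 0 := by
  rcases not_and_or.1 ht with ht | ht
  · have : smoothTransition =ᶠ[𝓝 t] fun _ ↦ 0 := by
      filter_upwards [Iio_mem_nhds (not_le.1 ht)] with s hs using zero_of_nonpos hs.le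
    simp [this.deriv_eq]
  · have : smoothTransition =ᶠ[𝓝 t] fun _ ↦ 1 := by
      filter_upwards [Ioi_mem_nhds (not_le.1 ht)] with s hs using one_of_one_le hs.le
    simp [this.deriv_eq]

theorem exists_abs_deriv_le : ∃ M, ∀ t, |deriv smoothTransition t| ≤ M :=
  (smoothTransition.contDiff.continuous_deriv le_rfl).bounded_above_of_compact_support
    (HasCompactSupport.intro isCompact_Icc fun _ ↦ deriv_eq_zero_of_notMem_Icc)

end Real.smoothTransition

section LogCutoff

variable {E : Type*} [NormedAddCommGroup E] {R : ℝ}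

noncomputable def logCutoff (R : ℝ) (x : E) : ℝ :=
  Real.smoothTransition (2 - Real.log (1 + ‖x‖ ^ 2) / R)

theorem norm_logCutoff_le_one (R : ℝ) (x : E) : ‖logCutoff R x‖ ≤ 1 := by
  rw [logCutoff, Real.norm_of_nonneg (Real.smoothTransition.nonneg _)]
  exact Real.smoothTransition.le_one _

theorem tendsto_logCutoff_atTop (x : E) :
    Tendsto (fun R ↦ logCutoff R x) atTop (𝓝 1) := by
  refine tendsto_const_nhds.congr' ?_
  filter_upwards [eventually_ge_atTop (max 1 (Real.log (1 + ‖x‖ ^ 2)))] with R hR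
  have hR0 : 0 < R := one_pos.trans_le ((le_max_left _ _).trans hR)
  refine (Real.smoothTransition.one_of_one_le ?_).symm
  have : Real.log (1 + ‖x‖ ^ 2) / R ≤ 1 := (div_le_one hR0).2 ((le_max_right _ _).trans hR)
  linarith

theorem hasCompactSupport_logCutoff [ProperSpace E] (hR : 0 < R) :
    HasCompactSupport (logCutoff (E := E) R) := by
  refine HasCompactSupport.intro (isCompact_closedBall 0 (Real.exp R)) fun x hx ↦ ?_
  rw [mem_closedBall_zero_iff, not_le] at hx
  have hexp : Real.exp (2 * R) < 1 + ‖x‖ ^ 2 := by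
    rw [mul_comm, Real.exp_mul, Real.rpow_two]
    nlinarith [Real.exp_pos R]
  have hlog : 2 * R < Real.log (1 + ‖x‖ ^ 2) := (Real.lt_log_iff_exp_lt (by positivity)).2 hexp
  refine Real.smoothTransition.zero_of_nonpos ?_
  rw [sub_nonpos, le_div_iff₀ hR]
  exact hlog.le

variable [InnerProductSpace ℝ E]

theorem contDiff_logCutoff (R : ℝ) {m : ℕ∞} : ContDiff ℝ m (logCutoff (E := E) R) :=
  Real.smoothTransition.contDiff.comp <| contDiff_const.sub <|
    ((contDiff_const.add (contDiff_norm_sq ℝ)).log fun _ ↦ by positivity).div_const R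

theorem norm_fderiv_logCutoff_le (hR : 0 < R) (x : E) :
    ‖fderiv ℝ (logCutoff R) x‖ ≤
      |deriv Real.smoothTransition (2 - Real.log (1 + ‖x‖ ^ 2) / R)| *
        (2 * ‖x‖ / (R * (1 + ‖x‖ ^ 2))) := by
  have hpos : 0 < 1 + ‖x‖ ^ 2 := by positivity
  have hlog :=
    (((hasStrictFDerivAt_norm_sq x).hasFDerivAt.const_add 1).log hpos.ne').mul_const R⁻¹
  have hψ : HasDerivAt Real.smoothTransition _ (2 - Real.log (1 + ‖x‖ ^ 2) / R) :=
    (Real.smoothTransition.contDiff.differentiable (n := 1) one_ne_zero _).hasDerivAt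
  have hξ : HasFDerivAt (logCutoff R) _ x := hψ.comp_hasFDerivAt x (hlog.const_sub 2)
  rw [hξ.fderiv, two_smul]
  simp only [norm_smul, norm_neg, ← two_smul ℝ, innerSL_apply_norm, Real.norm_eq_abs,
    abs_inv, abs_of_pos hR, abs_of_pos hpos, abs_two]
  apply le_of_eq
  field_simp

theorem norm_fderiv_logCutoff_le_indicator {M : ℝ}
    (hM : ∀ t, |deriv Real.smoothTransition t| ≤ M) (hR : 1 ≤ R) (x : E) :
    ‖fderiv ℝ (logCutoff R) x‖ ≤ 2 * M / R * (Icc 1 (Real.exp R)).indicator (·⁻¹) ‖x‖ := by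
  have hR0 : 0 < R := one_pos.trans_le hR
  have hM0 : 0 ≤ M := (abs_nonneg _).trans (hM 0)
  refine (norm_fderiv_logCutoff_le hR0 x).trans ?_
  set t := 2 - Real.log (1 + ‖x‖ ^ 2) / R
  by_cases ht : t ∈ Icc 0 1
  · have hpos : 0 < 1 + ‖x‖ ^ 2 := by positivity
    have hlow : Real.exp R ≤ 1 + ‖x‖ ^ 2 := by
      rw [← Real.le_log_iff_exp_le hpos, ← one_le_div hR0]
      linarith [ht.2]
    have hup : 1 + ‖x‖ ^ 2 ≤ Real.exp R ^ 2 := by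
      rw [← Real.exp_nat_mul, ← Real.log_le_iff_le_exp hpos, Nat.cast_two, ← div_le_iff₀ hR0]
      linarith [ht.1]
    have hx1 : 1 ≤ ‖x‖ := by nlinarith [Real.add_one_le_exp R, norm_nonneg x]
    have hxR : ‖x‖ ≤ Real.exp R := by nlinarith [Real.exp_pos R]
    rw [indicator_of_mem (mem_Icc.2 ⟨hx1, hxR⟩)]
    have hfrac : 2 * ‖x‖ / (R * (1 + ‖x‖ ^ 2)) ≤ 2 / (R * ‖x‖) := by
      rw [div_le_div_iff₀ (by positivity) (by positivity)]
      nlinarith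
    calc |deriv Real.smoothTransition t| * (2 * ‖x‖ / (R * (1 + ‖x‖ ^ 2)))
        ≤ M * (2 / (R * ‖x‖)) := mul_le_mul (hM t) hfrac (by positivity) hM0
      _ = 2 * M / R * ‖x‖⁻¹ := by field_simp
  · rw [Real.smoothTransition.deriv_eq_zero_of_notMem_Icc ht, abs_zero, zero_mul]
    exact mul_nonneg (by positivity)
      (indicator_nonneg (fun y hy ↦ inv_nonneg.2 (zero_le_one.trans hy.1)) _)

end LogCutoff

section Radial

variable {E : Type*} [NormedAddCommGroup E] [NormedSpace ℝ E] [FiniteDimensional ℝ E]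
  [MeasurableSpace E] [BorelSpace E] (μ : Measure E) [μ.IsAddHaarMeasure] {R : ℝ}

theorem eLpNorm_indicator_inv_norm (hd : 0 < finrank ℝ E) (hR : 0 ≤ R) :
    eLpNorm (fun x : E ↦ (Icc 1 (Real.exp R)).indicator (·⁻¹) ‖x‖) (finrank ℝ E) μ =
      ENNReal.ofReal ((finrank ℝ E * μ.real (ball 0 1) * R) ^ (finrank ℝ E : ℝ)⁻¹) := by
  have : Nontrivial E := finrank_pos_iff.1 hd
  set d := finrank ℝ E
  set f : ℝ → ℝ := (Icc 1 (Real.exp R)).indicator (·⁻¹)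
  have hIcc : Icc 1 (Real.exp R) ⊆ Ioi 0 := fun y hy ↦ one_pos.trans_le hy.1
  have hradial : EqOn (fun y ↦ y ^ (d - 1) • ‖f y‖ ^ (d : ℝ)) f (Ioi 0) := by
    intro y hy
    by_cases hyI : y ∈ Icc 1 (Real.exp R)
    · have hy0 : 0 < y := hy
      simp only [f, indicator_of_mem hyI, smul_eq_mul, Real.rpow_natCast,
        Real.norm_of_nonneg (inv_nonneg.2 hy0.le), inv_pow]
      rw [← Nat.sub_add_cancel hd, pow_succ]
      field_simp
      simp
    · simp [f, indicator_of_notMem hyI, hd.ne']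
  have hf_int : IntegrableOn f (Ioi 0) :=
    (((continuousOn_inv₀.mono fun y hy ↦ (hIcc hy).ne').integrableOn_compact
      isCompact_Icc).integrable_indicator measurableSet_Icc).integrableOn
  have hint : Integrable (fun x : E ↦ ‖f ‖x‖‖ ^ (d : ℝ)) μ :=
    (integrable_fun_norm_addHaar μ).2 (hf_int.congr_fun hradial.symm measurableSet_Ioi)
  have hmeas : AEStronglyMeasurable (fun x : E ↦ f ‖x‖) μ :=
    ((measurable_inv.indicator measurableSet_Icc).comp measurable_norm).aestronglyMeasurable
  have hd0 : (d : ℝ≥0∞) ≠ 0 := by exact_mod_cast hd.ne'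
  have hmem : MemLp (fun x : E ↦ f ‖x‖) d μ :=
    (integrable_norm_rpow_iff hmeas hd0 (ENNReal.natCast_ne_top d)).1 (by simpa using hint)
  rw [hmem.eLpNorm_eq_integral_rpow_norm hd0 (ENNReal.natCast_ne_top d), ENNReal.toReal_natCast,
    integral_fun_norm_addHaar μ (fun y ↦ ‖f y‖ ^ (d : ℝ)),
    setIntegral_congr_fun measurableSet_Ioi hradial, setIntegral_indicator measurableSet_Icc,
    inter_eq_right.2 hIcc, integral_Icc_eq_integral_Ioc,
    ← intervalIntegral.integral_of_le (Real.one_le_exp hR),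
    integral_inv_of_pos one_pos (Real.exp_pos R), div_one, Real.log_exp]
  simp [d, nsmul_eq_mul, mul_assoc]

end Radial

section Parabolicity

variable {E : Type*} [NormedAddCommGroup E] [InnerProductSpace ℝ E] [FiniteDimensional ℝ E]
  [MeasurableSpace E] [BorelSpace E] (μ : Measure E) [μ.IsAddHaarMeasure] {R : ℝ}

theorem eLpNorm_fderiv_logCutoff_le {M : ℝ} (hM : ∀ t, |deriv Real.smoothTransition t| ≤ M)
    (hd : 0 < finrank ℝ E) (hR : 1 ≤ R) :
    eLpNorm (fderiv ℝ (logCutoff (E := E) R)) (finrank ℝ E) μ ≤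
      ENNReal.ofReal (2 * M * (finrank ℝ E * μ.real (ball 0 1)) ^ (finrank ℝ E : ℝ)⁻¹ *
        R ^ ((finrank ℝ E : ℝ)⁻¹ - 1)) := by
  have hR0 : 0 < R := one_pos.trans_le hR
  have hM0 : 0 ≤ M := (abs_nonneg _).trans (hM 0)
  calc eLpNorm (fderiv ℝ (logCutoff R)) (finrank ℝ E) μ
      ≤ eLpNorm ((2 * M / R) • fun x : E ↦ (Icc 1 (Real.exp R)).indicator (·⁻¹) ‖x‖)
          (finrank ℝ E) μ :=
        eLpNorm_mono_real fun x ↦ norm_fderiv_logCutoff_le_indicator hM hR x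
    _ = ENNReal.ofReal
          (2 * M / R * (finrank ℝ E * μ.real (ball 0 1) * R) ^ (finrank ℝ E : ℝ)⁻¹) := by
        rw [eLpNorm_const_smul, eLpNorm_indicator_inv_norm μ hd hR0.le,
          Real.enorm_of_nonneg (by positivity), ← ENNReal.ofReal_mul (by positivity)]
    _ = _ := by
        rw [Real.mul_rpow (by positivity) hR0.le, Real.rpow_sub_one hR0.ne']
        congr 1
        ring

theorem exists_isParabolicCutoffSeq (hd : 1 < finrank ℝ E) :
    ∃ ξ : ℕ → E → ℝ, IsParabolicCutoffSeq (finrank ℝ E) μ ξ := by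
  obtain ⟨M, hM⟩ := Real.smoothTransition.exists_abs_deriv_le
  have hR : Tendsto (fun k : ℕ ↦ (k : ℝ) + 1) atTop atTop :=
    tendsto_atTop_add_const_right _ 1 tendsto_natCast_atTop_atTop
  refine ⟨fun k ↦ logCutoff ((k : ℝ) + 1), fun k ↦ contDiff_logCutoff _,
    fun k ↦ hasCompactSupport_logCutoff (by positivity), fun k ↦ norm_logCutoff_le_one _,
    fun x ↦ (tendsto_logCutoff_atTop x).comp hR, ?_⟩
  have hdecay : Tendsto (fun R : ℝ ↦ ENNReal.ofReal (2 * M *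
      (finrank ℝ E * μ.real (ball 0 1)) ^ (finrank ℝ E : ℝ)⁻¹ * R ^ ((finrank ℝ E : ℝ)⁻¹ - 1)))
      atTop (𝓝 0) := by
    have hexp : 0 < 1 - (finrank ℝ E : ℝ)⁻¹ := by
      rw [sub_pos]
      exact inv_lt_one_of_one_lt₀ (by exact_mod_cast hd)
    simpa [neg_sub] using ENNReal.tendsto_ofReal ((tendsto_rpow_neg_atTop hexp).const_mul
      (2 * M * (finrank ℝ E * μ.real (ball 0 1)) ^ (finrank ℝ E : ℝ)⁻¹))
  exact tendsto_of_tendsto_of_tendsto_of_le_of_le tendsto_const_nhds (hdecay.comp hR)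
    (fun _ ↦ zero_le) fun k ↦ eLpNorm_fderiv_logCutoff_le μ hM (by omega) (by simp)

end Parabolicity

theorem integral_combination_of_partials_eq_zero_general
    (n : ℕ) (hn : 2 ≤ n) (N : ℕ)
    (φ : Fin N → EuclideanSpace ℝ (Fin n) → ℝ)
    (hφ : ∀ j, ContDiff ℝ 1 (φ j))
    (hφLp : ∀ j, MemLp (φ j)
      (ENNReal.ofReal ((n : ℝ) / ((n : ℝ) - 1))) volume)
    (idx : Fin N → Fin n) (c : Fin N → ℝ)
    (hint : Integrable (fun x => ∑ j : Fin N,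
      c j * fderiv ℝ (φ j) x (EuclideanSpace.single (idx j) 1)) volume) :
    ∫ x : EuclideanSpace ℝ (Fin n), ∑ j : Fin N,
      c j * fderiv ℝ (φ j) x (EuclideanSpace.single (idx j) 1) = 0 := by
  have hd : 1 < finrank ℝ (EuclideanSpace ℝ (Fin n)) := by
    rw [finrank_euclideanSpace_fin]; omega
  obtain ⟨ξ, hξ⟩ := exists_isParabolicCutoffSeq volume hd
  have : (ENNReal.ofReal (n / (n - 1))).HolderConjugate
      (finrank ℝ (EuclideanSpace ℝ (Fin n))) := by
    have hn' : (1 : ℝ) < n := by exact_mod_cast hn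
    simpa [Real.conjExponent] using (Real.HolderConjugate.conjExponent hn').symm.ennrealOfReal
  exact hξ.integral_sum_fderiv_eq_zero Finset.univ hφ hφLp _ c hint

/-- If `φ₁, …, φ_N : ℝⁿ → ℝ` are `C¹` functions in `L^{n'}` (`n' = n/(n-1)`),
and a linear combination `a = Σⱼ cⱼ ∂φⱼ/∂x_{iⱼ}` of their partial derivatives
is integrable, then `∫ a = 0`. -/
theorem integral_combination_of_partials_eq_zero
    (n : ℕ) (hn : 2 ≤ n) (N : ℕ) (hN : 1 ≤ N)
    (φ : Fin N → EuclideanSpace ℝ (Fin n) → ℝ)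
    (hφ : ∀ j, ContDiff ℝ 1 (φ j))
    (hφLp : ∀ j, MemLp (φ j)
      (ENNReal.ofReal ((n : ℝ) / ((n : ℝ) - 1))) volume)
    (idx : Fin N → Fin n) (c : Fin N → ℝ)
    (hint : Integrable (fun x => ∑ j : Fin N,
      c j * fderiv ℝ (φ j) x (EuclideanSpace.single (idx j) 1)) volume) :
    ∫ x : EuclideanSpace ℝ (Fin n), ∑ j : Fin N,
      c j * fderiv ℝ (φ j) x (EuclideanSpace.single (idx j) 1) = 0 :=
  integral_combination_of_partials_eq_zero_general n hn N φ hφ hφLp idx c hint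
end
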